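/- arXiv:1604.01902 — 4 statements merged into one kernel-verified Lean document; each statement's English description precedes it below -/
import Mathlib

section
/- Let S ∈ C^∞(ℝⁿ) be a smooth real-valued phase function and φ ∈ C₀^∞(ℝⁿ, S) a smooth amplitude such that ∇S does not vanish on an open set containing the support of φ, and such that φ and all the functions P(L₁^*,…,Lₙ^*)φ and ω_i·P(L₁^*,…,Lₙ^*)φ (for words P and 1 ≤ i ≤ n) are Lebesgue integrable. Then for every N ∈ ℕ there exists a constant C = C(N, φ, S) > 0 such that |I(μ, φ, S)| ≤ C·|μ|^{−N} for all real μ with |μ| ≥ 1. -/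
open Filter MeasureTheory

/-! For a smooth real-valued phase `S ∈ C^∞(ℝⁿ)`, on the set where `∇S ≠ 0` one
defines the weights `ω_i(x) = (∂S/∂x_i)(x) / ‖∇S(x)‖²` and the differential
operators `L_i^*(g) = ∂/∂x_i (ω_i · g)`.  A smooth `φ : ℝⁿ → ℂ` lies in
`C₀^∞(ℝⁿ, S)` when, for every word `P` in the `L_i^*` and all `i, k`,
`|ω_i(x) · (Pφ)(x)| → 0` as `x_k → ±∞`.  The oscillatory integral is
`I(μ, φ, S) = ∫_{ℝⁿ} φ(x) e^{iμS(x)} dx`. -/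

/-- The `i`-th partial derivative. -/
noncomputable def pderiv {n : ℕ} (S : (Fin n → ℝ) → ℝ) (i : Fin n)
    (x : Fin n → ℝ) : ℝ :=
  fderiv ℝ S x (Pi.single i 1)

/-- The weight `ω_i(x) = (∂S/∂x_i)(x) / ‖∇S(x)‖²`. -/
noncomputable def omegaWt {n : ℕ} (S : (Fin n → ℝ) → ℝ) (i : Fin n)
    (x : Fin n → ℝ) : ℝ :=
  pderiv S i x / ∑ j : Fin n, (pderiv S j x) ^ 2

/-- The operator `L_i^*(g) = ∂/∂x_i (ω_i · g)`. -/
noncomputable def Lstar {n : ℕ} (S : (Fin n → ℝ) → ℝ) (i : Fin n)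
    (g : (Fin n → ℝ) → ℂ) (x : Fin n → ℝ) : ℂ :=
  fderiv ℝ (fun y => (omegaWt S i y : ℂ) * g y) x (Pi.single i 1)

/-- A word `P = L_{i₁}^* ⋯ L_{i_m}^*` in the operators `L_i^*`, applied to `g`. -/
noncomputable def wordOp {n : ℕ} (S : (Fin n → ℝ) → ℝ) :
    List (Fin n) → ((Fin n → ℝ) → ℂ) → ((Fin n → ℝ) → ℂ)
  | [], g => g
  | i :: P, g => Lstar S i (wordOp S P g)

/-- Membership `φ ∈ C₀^∞(ℝⁿ, S)`: `φ` is smooth and, for every word `P` in the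
operators `L₁^*, …, Lₙ^*` and all `1 ≤ i, k ≤ n`, `|ω_i(x)·(Pφ)(x)| → 0` as
`x_k → ±∞`. -/
def MemC0infty {n : ℕ} (S : (Fin n → ℝ) → ℝ) (φ : (Fin n → ℝ) → ℂ) : Prop :=
  ContDiff ℝ (⊤ : ℕ∞) φ ∧
    ∀ (P : List (Fin n)) (i k : Fin n),
      Tendsto (fun x => ‖(omegaWt S i x : ℂ) * wordOp S P φ x‖)
        (Filter.comap (fun x : Fin n → ℝ => x k) Filter.atTop) (nhds 0) ∧
      Tendsto (fun x => ‖(omegaWt S i x : ℂ) * wordOp S P φ x‖)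
        (Filter.comap (fun x : Fin n → ℝ => x k) Filter.atBot) (nhds 0)

/-- The oscillatory integral `I(μ, φ, S) = ∫_{ℝⁿ} φ(x) e^{iμS(x)} dx`. -/
noncomputable def oscInt {n : ℕ} (μ : ℝ) (φ : (Fin n → ℝ) → ℂ)
    (S : (Fin n → ℝ) → ℝ) : ℂ :=
  ∫ x : Fin n → ℝ, φ x * Complex.exp (Complex.I * μ * S x)

section Aux

open scoped Topology

variable {n : ℕ}

/-- 1D: integral of an integrable derivative of a function vanishing at `±∞` is zero. -/
lemma aux_integral_deriv_zero (G G' : ℝ → ℂ)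
    (hd : ∀ t, HasDerivAt G (G' t) t) (hint : Integrable G')
    (htop : Tendsto G atTop (nhds 0)) (hbot : Tendsto G atBot (nhds 0)) :
    ∫ t, G' t = 0 := by
  have h1 : ∫ t in Set.Ioi (0:ℝ), G' t = 0 - G 0 :=
    integral_Ioi_of_hasDerivAt_of_tendsto' (fun x _ => hd x) hint.integrableOn htop
  have h2 : ∫ t in Set.Iic (0:ℝ), G' t = G 0 - 0 :=
    integral_Iic_of_hasDerivAt_of_tendsto' (fun x _ => hd x) hint.integrableOn hbot
  rw [← intervalIntegral.integral_Iic_add_Ioi (b := (0:ℝ)) hint.integrableOn hint.integrableOn, h1, h2]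
  ring

lemma aux_hasDerivAt_insertNth {m : ℕ} (i : Fin (m+1)) (y : Fin m → ℝ) (t : ℝ) :
    HasDerivAt (fun s : ℝ => (i.insertNth s y : Fin (m+1) → ℝ)) (Pi.single i 1) t := by
  set v : Fin (m+1) → ℝ := Pi.single i 1 with hv
  set c : Fin (m+1) → ℝ := i.insertNth (0:ℝ) y with hc
  have h : (fun s : ℝ => (i.insertNth s y : Fin (m+1) → ℝ)) = fun s => c + s • v := by
    funext s
    ext j
    refine Fin.succAboveCases i ?_ ?_ j
    · simp [hv, hc]
    · intro j'
      simp [hv, hc, Fin.insertNth_apply_succAbove, Pi.single_eq_of_ne (i.succAbove_ne j')]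
  rw [h]
  simpa using ((hasDerivAt_id t).smul_const v).const_add c

/-- The integral over `ℝⁿ` of an `i`-th partial derivative vanishes, provided the
function decays in the `i`-th coordinate and the derivative is integrable. -/
lemma aux_integral_pderiv_zero (i : Fin n) (F : (Fin n → ℝ) → ℂ)
    (hdiff : ∀ x, DifferentiableAt ℝ F x)
    (hF'int : Integrable (fun x => fderiv ℝ F x (Pi.single i 1)))
    (htop : Tendsto (fun x => ‖F x‖)
      (Filter.comap (fun x : Fin n → ℝ => x i) atTop) (nhds 0))
    (hbot : Tendsto (fun x => ‖F x‖)
      (Filter.comap (fun x : Fin n → ℝ => x i) atBot) (nhds 0)) :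
    (∫ x, fderiv ℝ F x (Pi.single i 1)) = 0 := by
  have hn := i.pos
  obtain ⟨m, rfl⟩ : ∃ m, n = m + 1 := ⟨n - 1, by omega⟩
  set F' : (Fin (m+1) → ℝ) → ℂ := fun x => fderiv ℝ F x (Pi.single i 1) with hF'def
  set e : (Fin (m+1) → ℝ) ≃ᵐ ℝ × (Fin m → ℝ) :=
    MeasurableEquiv.piFinSuccAbove (fun _ => ℝ) i with he
  have hem : MeasurePreserving e.symm :=
    (volume_preserving_piFinSuccAbove (fun _ : Fin (m+1) => ℝ) i).symm e
  have hsymm : ∀ p : ℝ × (Fin m → ℝ), e.symm p = i.insertNth p.1 p.2 := fun p => rfl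
  have hcomp : Integrable (fun p : ℝ × (Fin m → ℝ) => F' (e.symm p)) :=
    (hem.integrable_comp_emb e.symm.measurableEmbedding).2 hF'int
  have h1 : (∫ x, F' x) = ∫ p : ℝ × (Fin m → ℝ), F' (e.symm p) :=
    (hem.integral_comp e.symm.measurableEmbedding F').symm
  rw [h1]
  rw [Measure.volume_eq_prod] at hcomp ⊢
  rw [integral_prod_symm _ hcomp]
  have hae : ∀ᵐ y : (Fin m → ℝ), Integrable (fun t => F' (e.symm (t, y))) :=
    hcomp.prod_left_ae
  refine integral_eq_zero_of_ae ?_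
  filter_upwards [hae] with y hy
  have hins : ∀ t : ℝ, e.symm (t, y) = i.insertNth t y := fun t => hsymm (t, y)
  have hDeriv : ∀ t : ℝ, HasDerivAt (fun s => F (i.insertNth s y))
      (F' (i.insertNth t y)) t := fun t =>
    (hdiff (i.insertNth t y)).hasFDerivAt.comp_hasDerivAt t
      (aux_hasDerivAt_insertNth i y t)
  have hinty : Integrable (fun t => F' (i.insertNth t y)) := by
    simpa only [hins] using hy
  have htend : Tendsto (fun t : ℝ => i.insertNth t y) atTop
      (Filter.comap (fun x : Fin (m+1) → ℝ => x i) atTop) := by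
    rw [Filter.tendsto_comap_iff]
    refine Filter.tendsto_atTop_mono (fun t => ?_) tendsto_id
    simp [Function.comp, Fin.insertNth_apply_same]
  have htendb : Tendsto (fun t : ℝ => i.insertNth t y) atBot
      (Filter.comap (fun x : Fin (m+1) → ℝ => x i) atBot) := by
    rw [Filter.tendsto_comap_iff]
    refine Filter.tendsto_atBot_mono (fun t => ?_) tendsto_id
    simp [Function.comp, Fin.insertNth_apply_same]
  have hGtop : Tendsto (fun t => F (i.insertNth t y)) atTop (nhds 0) := by
    rw [tendsto_zero_iff_norm_tendsto_zero]
    exact htop.comp htend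
  have hGbot : Tendsto (fun t => F (i.insertNth t y)) atBot (nhds 0) := by
    rw [tendsto_zero_iff_norm_tendsto_zero]
    exact hbot.comp htendb
  have := aux_integral_deriv_zero (fun s => F (i.insertNth s y))
    (fun t => F' (i.insertNth t y)) hDeriv hinty hGtop hGbot
  simpa only [hins, Pi.zero_apply] using this



lemma aux_norm_exp (a b : ℝ) : ‖Complex.exp (Complex.I * a * b)‖ = 1 := by
  have h : Complex.I * a * b = ((a * b : ℝ) : ℂ) * Complex.I := by push_cast; ring
  rw [h, Complex.norm_exp_ofReal_mul_I]

lemma aux_pderiv_contDiff {S : (Fin n → ℝ) → ℝ} (hS : ContDiff ℝ (⊤ : ℕ∞) S) (i : Fin n) :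
    ContDiff ℝ (⊤ : ℕ∞) (pderiv S i) :=
  (hS.fderiv_right (by simp)).clm_apply contDiff_const

lemma aux_denom_pos {S : (Fin n → ℝ) → ℝ} {x : Fin n → ℝ}
    (h : ∃ i, pderiv S i x ≠ 0) :
    0 < ∑ j : Fin n, (pderiv S j x) ^ 2 := by
  obtain ⟨i, hi⟩ := h
  have h2 : 0 < (pderiv S i x) ^ 2 := by positivity
  exact Finset.sum_pos' (fun j _ => sq_nonneg _) ⟨i, Finset.mem_univ i, h2⟩

lemma aux_omega_contDiffOn {S : (Fin n → ℝ) → ℝ} (hS : ContDiff ℝ (⊤ : ℕ∞) S)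
    {U : Set (Fin n → ℝ)} (hgrad : ∀ x ∈ U, ∃ i, pderiv S i x ≠ 0) (i : Fin n) :
    ContDiffOn ℝ (⊤ : ℕ∞) (omegaWt S i) U := by
  refine ContDiffOn.div (aux_pderiv_contDiff hS i).contDiffOn
    (ContDiff.contDiffOn (ContDiff.sum fun j _ => (aux_pderiv_contDiff hS j).pow 2)) ?_
  exact fun x hx => ne_of_gt (aux_denom_pos (hgrad x hx))

lemma aux_omega_bound (S : (Fin n → ℝ) → ℝ) (i : Fin n) (x : Fin n → ℝ) :
    |pderiv S i x * omegaWt S i x| ≤ 1 := by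
  unfold omegaWt
  set D := ∑ j : Fin n, (pderiv S j x) ^ 2 with hD
  rcases eq_or_ne D 0 with h | h
  · simp [h]
  · have hDpos : 0 < D :=
      lt_of_le_of_ne (Finset.sum_nonneg fun j _ => sq_nonneg _) (Ne.symm h)
    have h1 : pderiv S i x * (pderiv S i x / D) = (pderiv S i x) ^ 2 / D := by ring
    rw [h1, abs_of_nonneg (div_nonneg (sq_nonneg _) hDpos.le), div_le_one hDpos, hD]
    exact Finset.single_le_sum (f := fun j => (pderiv S j x) ^ 2)
      (fun j _ => sq_nonneg _) (Finset.mem_univ i)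

lemma aux_omega_sum {S : (Fin n → ℝ) → ℝ} {x : Fin n → ℝ}
    (h : ∃ i, pderiv S i x ≠ 0) :
    ∑ i : Fin n, omegaWt S i x * pderiv S i x = 1 := by
  have hD := aux_denom_pos h
  unfold omegaWt
  calc ∑ i : Fin n, pderiv S i x / (∑ j : Fin n, (pderiv S j x) ^ 2) * pderiv S i x
      = ∑ i : Fin n, (pderiv S i x) ^ 2 / (∑ j : Fin n, (pderiv S j x) ^ 2) :=
        Finset.sum_congr rfl fun i _ => by ring
    _ = (∑ j : Fin n, (pderiv S j x) ^ 2) / (∑ j : Fin n, (pderiv S j x) ^ 2) := by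
        rw [← Finset.sum_div]
    _ = 1 := div_self (ne_of_gt hD)

lemma aux_wordOp_props {S : (Fin n → ℝ) → ℝ} {φ : (Fin n → ℝ) → ℂ}
    {U : Set (Fin n → ℝ)} (hS : ContDiff ℝ (⊤ : ℕ∞) S) (hφ : ContDiff ℝ (⊤ : ℕ∞) φ)
    (hU : IsOpen U) (hsupp : tsupport φ ⊆ U)
    (hgrad : ∀ x ∈ U, ∃ i, pderiv S i x ≠ 0) :
    ∀ P : List (Fin n), ContDiffOn ℝ (⊤ : ℕ∞) (wordOp S P φ) U ∧
      ∀ x ∉ tsupport φ, wordOp S P φ x = 0 := by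
  intro P
  induction P with
  | nil =>
    exact ⟨hφ.contDiffOn, fun x hx => image_eq_zero_of_notMem_tsupport hx⟩
  | cons i P ih =>
    have hzero_ev : ∀ x ∉ tsupport φ,
        (fun y => ((omegaWt S i y : ℂ) * wordOp S P φ y)) =ᶠ[nhds x]
          (fun _ => (0:ℂ)) := by
      intro x hx
      filter_upwards [(isClosed_tsupport φ).isOpen_compl.mem_nhds hx] with y hy
      simp [ih.2 y hy]
    have hcd : ContDiffOn ℝ (⊤ : ℕ∞) (fun y => (omegaWt S i y : ℂ) * wordOp S P φ y) U :=
      (Complex.ofRealCLM.contDiff.comp_contDiffOn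
        (aux_omega_contDiffOn hS hgrad i)).mul ih.1
    constructor
    · show ContDiffOn ℝ (⊤ : ℕ∞) (Lstar S i (wordOp S P φ)) U
      have h1 : ContDiffOn ℝ (⊤ : ℕ∞)
          (fun x => fderiv ℝ (fun y => (omegaWt S i y : ℂ) * wordOp S P φ y) x) U :=
        hcd.fderiv_of_isOpen hU (by simp)
      exact h1.clm_apply contDiffOn_const
    · intro x hx
      show Lstar S i (wordOp S P φ) x = 0
      unfold Lstar
      rw [(hzero_ev x hx).fderiv_eq]
      simp

lemma aux_key_step {S : (Fin n → ℝ) → ℝ} (hS : ContDiff ℝ (⊤ : ℕ∞) S)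
    {φ : (Fin n → ℝ) → ℂ} (hφ : MemC0infty S φ)
    {U : Set (Fin n → ℝ)} (hU : IsOpen U) (hsupp : tsupport φ ⊆ U)
    (hgrad : ∀ x ∈ U, ∃ i, pderiv S i x ≠ 0)
    (hintP : ∀ P : List (Fin n), Integrable (wordOp S P φ))
    (hintω : ∀ (P : List (Fin n)) (i : Fin n),
      Integrable (fun x => (omegaWt S i x : ℂ) * wordOp S P φ x))
    (P : List (Fin n)) (μ : ℝ) (hμ : μ ≠ 0) :
    ‖∫ x, wordOp S P φ x * Complex.exp (Complex.I * μ * S x)‖ ≤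
      |μ|⁻¹ * ∑ i : Fin n,
        ‖∫ x, wordOp S (i :: P) φ x * Complex.exp (Complex.I * μ * S x)‖ := by
  set E : (Fin n → ℝ) → ℂ := fun x => Complex.exp (Complex.I * μ * S x) with hE
  have hprops := aux_wordOp_props hS hφ.1 hU hsupp hgrad
  have hSdiff : Differentiable ℝ S := hS.differentiable (by simp)
  have hEcont : Continuous E := by
    apply Complex.continuous_exp.comp
    exact (continuous_const.mul (Complex.continuous_ofReal.comp hS.continuous))
  have hE1 : ∀ x, ‖E x‖ = 1 := fun x => aux_norm_exp μ (S x)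
  have hEfd : ∀ x, HasFDerivAt E
      (E x • ((Complex.I * μ) • (Complex.ofRealCLM.comp (fderiv ℝ S x)))) x := by
    intro x
    have h1 : HasFDerivAt (fun y => ((S y : ℂ)))
        (Complex.ofRealCLM.comp (fderiv ℝ S x)) x :=
      Complex.ofRealCLM.hasFDerivAt.comp x (hSdiff x).hasFDerivAt
    have h2 : HasFDerivAt (fun y => Complex.I * μ * (S y : ℂ))
        ((Complex.I * μ) • (Complex.ofRealCLM.comp (fderiv ℝ S x))) x :=
      h1.const_mul _
    exact h2.cexp
  have hdiff_h : ∀ (i : Fin n) (x : Fin n → ℝ),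
      DifferentiableAt ℝ (fun y => (omegaWt S i y : ℂ) * wordOp S P φ y) x := by
    intro i x
    by_cases hx : x ∈ U
    · have hcd : ContDiffOn ℝ (⊤ : ℕ∞) (fun y => (omegaWt S i y : ℂ) * wordOp S P φ y) U :=
        (Complex.ofRealCLM.contDiff.comp_contDiffOn
          (aux_omega_contDiffOn hS hgrad i)).mul (hprops P).1
      exact (hcd.contDiffAt (hU.mem_nhds hx)).differentiableAt (by simp)
    · have hx' : x ∉ tsupport φ := fun h => hx (hsupp h)
      have hev : (fun y => (omegaWt S i y : ℂ) * wordOp S P φ y) =ᶠ[nhds x]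
          (fun _ => (0:ℂ)) := by
        filter_upwards [(isClosed_tsupport φ).isOpen_compl.mem_nhds hx'] with y hy
        simp [(hprops P).2 y hy]
      exact (differentiableAt_const (0:ℂ)).congr_of_eventuallyEq hev
  have hFd : ∀ (i : Fin n) (x : Fin n → ℝ),
      HasFDerivAt (fun y => (omegaWt S i y : ℂ) * wordOp S P φ y * E y)
        (((omegaWt S i x : ℂ) * wordOp S P φ x) •
            (E x • ((Complex.I * μ) • (Complex.ofRealCLM.comp (fderiv ℝ S x)))) +
          E x • fderiv ℝ (fun y => (omegaWt S i y : ℂ) * wordOp S P φ y) x) x := by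
    intro i x
    exact (hdiff_h i x).hasFDerivAt.mul (hEfd x)
  have hFval : ∀ (i : Fin n) (x : Fin n → ℝ),
      fderiv ℝ (fun y => (omegaWt S i y : ℂ) * wordOp S P φ y * E y) x (Pi.single i 1)
        = wordOp S (i :: P) φ x * E x +
          (Complex.I * μ) *
            (((omegaWt S i x : ℂ) * wordOp S P φ x) * ((pderiv S i x : ℂ) * E x)) := by
    intro i x
    rw [(hFd i x).fderiv]
    simp only [ContinuousLinearMap.add_apply, ContinuousLinearMap.smul_apply,
      ContinuousLinearMap.coe_comp', Function.comp_apply, Complex.ofRealCLM_apply,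
      smul_eq_mul, wordOp, Lstar, pderiv]
    ring
  have intA : ∀ Q : List (Fin n),
      Integrable (fun x => wordOp S Q φ x * E x) := by
    intro Q
    refine (hintP Q).norm.mono' ((hintP Q).1.mul hEcont.aestronglyMeasurable) ?_
    filter_upwards with x
    exact le_of_eq (by rw [norm_mul, hE1 x, mul_one])
  have intB : ∀ i : Fin n, Integrable (fun x =>
      ((omegaWt S i x : ℂ) * wordOp S P φ x) * ((pderiv S i x : ℂ) * E x)) := by
    intro i
    have hm : AEStronglyMeasurable (fun x =>
        ((omegaWt S i x : ℂ) * wordOp S P φ x) * ((pderiv S i x : ℂ) * E x)) volume :=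
      (hintω P i).1.mul (((Complex.continuous_ofReal.comp
        (aux_pderiv_contDiff hS i).continuous).mul hEcont).aestronglyMeasurable)
    refine (hintP P).norm.mono' hm ?_
    filter_upwards with x
    rw [norm_mul, norm_mul, norm_mul, hE1 x, mul_one, Complex.norm_real,
      Complex.norm_real, Real.norm_eq_abs, Real.norm_eq_abs]
    have hb := aux_omega_bound S i x
    have hnn := norm_nonneg (wordOp S P φ x)
    nlinarith [abs_nonneg (omegaWt S i x), abs_nonneg (pderiv S i x),
      abs_mul (pderiv S i x) (omegaWt S i x), abs_nonneg (pderiv S i x * omegaWt S i x)]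
  have hzero : ∀ i : Fin n,
      (∫ x, wordOp S (i :: P) φ x * E x) +
        (Complex.I * μ) * ∫ x,
          ((omegaWt S i x : ℂ) * wordOp S P φ x) * ((pderiv S i x : ℂ) * E x) = 0 := by
    intro i
    have heqd : (fun x => fderiv ℝ
        (fun y => (omegaWt S i y : ℂ) * wordOp S P φ y * E y) x (Pi.single i 1))
        = fun x => wordOp S (i :: P) φ x * E x +
          (Complex.I * μ) *
            (((omegaWt S i x : ℂ) * wordOp S P φ x) * ((pderiv S i x : ℂ) * E x)) :=
      funext (hFval i)
    have hFint : Integrable (fun x => fderiv ℝ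
        (fun y => (omegaWt S i y : ℂ) * wordOp S P φ y * E y) x (Pi.single i 1)) := by
      rw [heqd]
      exact (intA (i :: P)).add ((intB i).const_mul _)
    have hdiffF : ∀ x, DifferentiableAt ℝ
        (fun y => (omegaWt S i y : ℂ) * wordOp S P φ y * E y) x :=
      fun x => (hdiff_h i x).mul (hEfd x).differentiableAt
    have heqn : (fun x => ‖(omegaWt S i x : ℂ) * wordOp S P φ x * E x‖)
        = fun x => ‖(omegaWt S i x : ℂ) * wordOp S P φ x‖ := by
      funext x; rw [norm_mul, hE1 x, mul_one]
    have hdect : Tendsto (fun x => ‖(omegaWt S i x : ℂ) * wordOp S P φ x * E x‖)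
        (Filter.comap (fun x : Fin n → ℝ => x i) atTop) (nhds 0) := by
      rw [heqn]; exact (hφ.2 P i i).1
    have hdecb : Tendsto (fun x => ‖(omegaWt S i x : ℂ) * wordOp S P φ x * E x‖)
        (Filter.comap (fun x : Fin n → ℝ => x i) atBot) (nhds 0) := by
      rw [heqn]; exact (hφ.2 P i i).2
    have h0 := aux_integral_pderiv_zero i
      (fun y => (omegaWt S i y : ℂ) * wordOp S P φ y * E y) hdiffF hFint hdect hdecb
    rw [heqd, integral_add (intA (i :: P)) ((intB i).const_mul _),
      integral_const_mul] at h0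
    exact h0
  have hptwise : ∀ x, wordOp S P φ x * E x =
      ∑ i : Fin n, ((omegaWt S i x : ℂ) * wordOp S P φ x) * ((pderiv S i x : ℂ) * E x) := by
    intro x
    by_cases hx : x ∈ U
    · have hsum := aux_omega_sum (hgrad x hx)
      calc wordOp S P φ x * E x
          = ((∑ i : Fin n, omegaWt S i x * pderiv S i x : ℝ) : ℂ) *
            (wordOp S P φ x * E x) := by rw [hsum]; simp
        _ = ∑ i : Fin n, ((omegaWt S i x : ℂ) * wordOp S P φ x) *
              ((pderiv S i x : ℂ) * E x) := by
            push_cast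
            rw [Finset.sum_mul]
            exact Finset.sum_congr rfl fun i _ => by ring
    · have hx' : x ∉ tsupport φ := fun h => hx (hsupp h)
      rw [(hprops P).2 x hx']
      simp
  have hIμ : (Complex.I * (μ : ℂ)) ≠ 0 :=
    mul_ne_zero Complex.I_ne_zero (by exact_mod_cast hμ)
  have hIeq : (∫ x, wordOp S P φ x * E x) =
      ∑ i : Fin n, -((Complex.I * μ)⁻¹ * ∫ x, wordOp S (i :: P) φ x * E x) := by
    rw [integral_congr_ae (ae_of_all _ hptwise), integral_finset_sum _ (fun i _ => intB i)]
    refine Finset.sum_congr rfl fun i _ => ?_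
    have h := hzero i
    rw [eq_comm, neg_eq_iff_eq_neg, inv_mul_eq_iff_eq_mul₀ hIμ]
    linear_combination h
  rw [hIeq]
  calc ‖∑ i : Fin n, -((Complex.I * μ)⁻¹ * ∫ x, wordOp S (i :: P) φ x * E x)‖
      ≤ ∑ i : Fin n, ‖-((Complex.I * μ)⁻¹ * ∫ x, wordOp S (i :: P) φ x * E x)‖ :=
        norm_sum_le _ _
    _ = ∑ i : Fin n, |μ|⁻¹ * ‖∫ x, wordOp S (i :: P) φ x * E x‖ := by
        refine Finset.sum_congr rfl fun i _ => ?_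
        rw [norm_neg, norm_mul, norm_inv, norm_mul, Complex.norm_I, one_mul,
          Complex.norm_real, Real.norm_eq_abs]
    _ = |μ|⁻¹ * ∑ i : Fin n, ‖∫ x, wordOp S (i :: P) φ x * E x‖ := by
        rw [Finset.mul_sum]

end Aux

/-- nonstationary phase.  If `S` is smooth, `φ ∈ C₀^∞(ℝⁿ, S)`,
`∇S` does not vanish on an open set containing the support of `φ`, and `φ` together
with all the derived amplitudes `P(L₁^*,…,Lₙ^*)φ` and `ω_i·P(L₁^*,…,Lₙ^*)φ` are
Lebesgue integrable, then for every `N ∈ ℕ` there is `C = C(N, φ, S) > 0` with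
`|I(μ, φ, S)| ≤ C·|μ|^{−N}` for all real `μ` with `|μ| ≥ 1`. -/
theorem stmt_0 {n : ℕ} (S : (Fin n → ℝ) → ℝ) (hS : ContDiff ℝ (⊤ : ℕ∞) S)
    (φ : (Fin n → ℝ) → ℂ) (hφ : MemC0infty S φ)
    (U : Set (Fin n → ℝ)) (hU : IsOpen U) (hsupp : tsupport φ ⊆ U)
    (hgrad : ∀ x ∈ U, ∃ i, pderiv S i x ≠ 0)
    (hint : Integrable φ)
    (hintP : ∀ P : List (Fin n), Integrable (wordOp S P φ))
    (hintω : ∀ (P : List (Fin n)) (i : Fin n),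
      Integrable (fun x => (omegaWt S i x : ℂ) * wordOp S P φ x)) :
    ∀ N : ℕ, ∃ C > 0, ∀ μ : ℝ, 1 ≤ |μ| →
      ‖oscInt μ φ S‖ ≤ C / |μ| ^ N := by
  have key := aux_key_step hS hφ hU hsupp hgrad hintP hintω
  have H : ∀ N : ℕ, ∀ P : List (Fin n), ∃ C > 0, ∀ μ : ℝ, 1 ≤ |μ| →
      ‖∫ x, wordOp S P φ x * Complex.exp (Complex.I * μ * S x)‖ ≤ C / |μ| ^ N := by
    intro N
    induction N with
    | zero =>
      intro P
      have hnn : 0 ≤ ∫ x, ‖wordOp S P φ x‖ := integral_nonneg fun x => norm_nonneg _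
      refine ⟨(∫ x, ‖wordOp S P φ x‖) + 1, by linarith, fun μ hμ => ?_⟩
      rw [pow_zero, div_one]
      calc ‖∫ x, wordOp S P φ x * Complex.exp (Complex.I * μ * S x)‖
          ≤ ∫ x, ‖wordOp S P φ x * Complex.exp (Complex.I * μ * S x)‖ :=
            norm_integral_le_integral_norm _
        _ = ∫ x, ‖wordOp S P φ x‖ := by
            refine integral_congr_ae (ae_of_all _ fun x => ?_)
            simp only [norm_mul, aux_norm_exp, mul_one]
        _ ≤ (∫ x, ‖wordOp S P φ x‖) + 1 := by linarith
    | succ N ih =>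
      intro P
      choose C hCpos hC using fun i : Fin n => ih (i :: P)
      have hsum_nn : 0 ≤ ∑ i : Fin n, C i :=
        Finset.sum_nonneg fun i _ => (hCpos i).le
      refine ⟨(∑ i : Fin n, C i) + 1, by linarith, fun μ hμ => ?_⟩
      have hμpos : (0:ℝ) < |μ| := lt_of_lt_of_le one_pos hμ
      have hμ0 : μ ≠ 0 := fun h => by simp [h] at hμpos
      have h1 := key P μ hμ0
      have h2 : ∑ i : Fin n,
          ‖∫ x, wordOp S (i :: P) φ x * Complex.exp (Complex.I * μ * S x)‖
          ≤ ∑ i : Fin n, C i / |μ| ^ N :=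
        Finset.sum_le_sum fun i _ => hC i μ hμ
      calc ‖∫ x, wordOp S P φ x * Complex.exp (Complex.I * μ * S x)‖
          ≤ |μ|⁻¹ * ∑ i : Fin n,
            ‖∫ x, wordOp S (i :: P) φ x * Complex.exp (Complex.I * μ * S x)‖ := h1
        _ ≤ |μ|⁻¹ * ∑ i : Fin n, C i / |μ| ^ N := by
            exact mul_le_mul_of_nonneg_left h2 (inv_nonneg.2 hμpos.le)
        _ = (∑ i : Fin n, C i) / |μ| ^ (N + 1) := by
            rw [← Finset.sum_div, pow_succ, div_mul_eq_div_div, div_eq_inv_mul]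
            ring
        _ ≤ ((∑ i : Fin n, C i) + 1) / |μ| ^ (N + 1) := by
            have hp : (0:ℝ) < |μ| ^ (N + 1) := pow_pos hμpos _
            gcongr
            linarith
  intro N
  obtain ⟨C, hCpos, hC⟩ := H N []
  refine ⟨C, hCpos, fun μ hμ => ?_⟩
  have := hC μ hμ
  simpa [oscInt, wordOp] using this
end

section
/- Let E/F be an unramified quadratic field extension. Then for all r, n ∈ ℕ: (i) 𝒪_r^{(n)} = ∅ if n is odd or n > 2r; (ii) 𝒪_r^{(0)} = 𝒪_r^×; (iii) 𝒪_r^{(n)} = ϖ^{n/2}·(𝒪_{r−n/2}^× ∖ 𝒪_{r−n/2+1}^×) if n is even and 0 < n ≤ 2r. -/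
/-!
Every `z ∈ 𝒪` is `x + yβ` with `x, y ∈ 𝔬` uniquely: `𝔬` is a valuation ring, `𝔬 → 𝒪` is a local
homomorphism and `β ∉ 𝔬`. Hence `x + yβ ∈ 𝒪_r` iff `ϖ^r ∣ y`, and for `m ≤ r`,
`ϖ^m w ∈ 𝒪_r` iff `w ∈ 𝒪_{r-m}`. As `E/F` is unramified, `ϖ` is a uniformizer of `𝒪`, so a
nonzero `t` is `ϖ^m w` with `w ∈ 𝒪^×` and `Nr t ∈ ϖ^{2m} 𝔬^×`: the norm condition forces
`n = 2m` and `t = ϖ^m w`. A unit `w` of `𝒪` lying in `𝒪_k` is a unit of `𝒪_k`, its inverse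
`σ w / Nr w` lying in `𝒪_k` too. Finally `ϖ^m w ∈ ϖ 𝒪_r` iff `w ∈ 𝒪_{r-m+1}`, which always
holds when `m > r`.
-/

/-- The order `𝒪_r = 𝔬 + ϖ^rβ𝔬` of conductor `r`. -/
def ordSet {o O : Type*} [CommRing o] [CommRing O] (f : o →+* O) (ϖ : o) (β : O)
    (r : ℕ) : Set O :=
  {z | ∃ x y : o, z = f x + f (ϖ ^ r * y) * β}

/-- The unit group `𝒪_r^×` of the order `𝒪_r` (as a subset of `𝒪`). -/
def ordUnits {o O : Type*} [CommRing o] [CommRing O] (f : o →+* O) (ϖ : o) (β : O)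
    (r : ℕ) : Set O :=
  {z | z ∈ ordSet f ϖ β r ∧ ∃ w ∈ ordSet f ϖ β r, z * w = 1}

/-- The set `𝒪_r^{(n)} = {t ∈ 𝒪_r ∖ ϖ𝒪_r : Nr(t) ∈ ϖⁿ𝔬^×}`. -/
def ordLayer {o O : Type*} [CommRing o] [CommRing O] (f : o →+* O) (ϖ : o) (β : O)
    (Nr : O →* o) (r n : ℕ) : Set O :=
  {z | z ∈ ordSet f ϖ β r ∧ (¬ ∃ s ∈ ordSet f ϖ β r, z = f ϖ * s) ∧
    ∃ u : oˣ, Nr z = ϖ ^ n * u}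

section Orders

variable {o O : Type*} [CommRing o] [CommRing O] {f : o →+* O} {ϖ : o} {β : O}
  {σ : O →+* O} {Nr : O →* o}

theorem isLocalHom_of_not_isUnit_map_irreducible [IsDomain o] [IsDiscreteValuationRing o]
    (hϖ : Irreducible ϖ) (hfϖ : ¬IsUnit (f ϖ)) : IsLocalHom f where
  map_nonunit c hc := by
    by_contra hc'
    have hϖc : ϖ ∣ c := by
      rw [← Ideal.mem_span_singleton, ← hϖ.maximalIdeal_eq]
      exact hc'
    obtain ⟨d, rfl⟩ := hϖc
    exact hfϖ (isUnit_of_mul_isUnit_left (by rwa [← map_mul]))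

theorem eq_zero_of_map_add_map_mul_eq_zero [IsDomain o] [ValuationRing o] [IsDomain O]
    [IsLocalHom f] (hf : Function.Injective f) (hβ : β ∉ Set.range f) {x y : o}
    (h : f x + f y * β = 0) : x = 0 ∧ y = 0 := by
  by_cases hy : y = 0
  · subst hy
    exact ⟨hf (by simpa using h), rfl⟩
  exfalso
  have hfy : f y ≠ 0 := (map_ne_zero_iff f hf).mpr hy
  rcases ValuationRing.dvd_total x y with ⟨c, rfl⟩ | ⟨c, rfl⟩
  · have hc : 1 + f c * β = 0 := by
      have hfx : f x ≠ 0 := left_ne_zero_of_mul (by rwa [← map_mul])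
      refine (mul_eq_zero.mp ?_).resolve_left hfx
      rw [← h, map_mul]
      ring
    -- `c` is a unit because `f` is local, and then `β = -f c⁻¹`.
    obtain ⟨u, rfl⟩ : IsUnit c :=
      (IsUnit.of_mul_eq_one (b := -β) (by linear_combination -hc)).of_map f c
    have hu : f ↑u⁻¹ * f ↑u = 1 := by rw [← map_mul, Units.inv_mul, map_one]
    exact hβ ⟨-↑u⁻¹, by rw [map_neg]; linear_combination (-f ↑u⁻¹) * hc + β * hu⟩
  · have hc : f c + β = 0 := by
      refine (mul_eq_zero.mp ?_).resolve_left hfy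
      rw [← h, map_mul]
      ring
    exact hβ ⟨-c, by rw [map_neg]; linear_combination -hc⟩

theorem map_add_map_mul_inj [IsDomain o] [ValuationRing o] [IsDomain O] [IsLocalHom f]
    (hf : Function.Injective f) (hβ : β ∉ Set.range f) {x y x' y' : o} :
    f x + f y * β = f x' + f y' * β ↔ x = x' ∧ y = y' := by
  refine ⟨fun h => ?_, fun ⟨hx, hy⟩ => hx ▸ hy ▸ rfl⟩
  have h0 : f (x - x') + f (y - y') * β = 0 := by
    rw [map_sub, map_sub]
    linear_combination h
  obtain ⟨hx, hy⟩ := eq_zero_of_map_add_map_mul_eq_zero hf hβ h0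
  exact ⟨sub_eq_zero.mp hx, sub_eq_zero.mp hy⟩

theorem map_add_map_mul_mem_ordSet_iff [IsDomain o] [ValuationRing o] [IsDomain O]
    [IsLocalHom f] (hf : Function.Injective f) (hβ : β ∉ Set.range f) {x y : o} {r : ℕ} :
    f x + f y * β ∈ ordSet f ϖ β r ↔ ϖ ^ r ∣ y := by
  constructor
  · rintro ⟨a, b, h⟩
    exact ⟨b, ((map_add_map_mul_inj hf hβ).mp h).2⟩
  · rintro ⟨b, rfl⟩
    exact ⟨x, b, rfl⟩

theorem map_mul_mem_ordSet {r : ℕ} (a : o) {z : O} (hz : z ∈ ordSet f ϖ β r) :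
    f a * z ∈ ordSet f ϖ β r := by
  obtain ⟨x, y, rfl⟩ := hz
  exact ⟨a * x, a * y, by simp only [map_mul, map_pow]; ring⟩

theorem map_pow_mul_mem_ordSet (hgen : ∀ z : O, ∃ x y : o, z = f x + f y * β) (r : ℕ)
    (z : O) : f (ϖ ^ r) * z ∈ ordSet f ϖ β r := by
  obtain ⟨x, y, rfl⟩ := hgen z
  exact ⟨ϖ ^ r * x, y, by simp only [map_mul, map_pow]; ring⟩

theorem map_pow_mul_mem_ordSet_iff [IsDomain o] [ValuationRing o] [IsDomain O]
    [IsLocalHom f] (hf : Function.Injective f) (hβ : β ∉ Set.range f)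
    (hgen : ∀ z : O, ∃ x y : o, z = f x + f y * β) (hϖ0 : ϖ ≠ 0) {m r : ℕ} (hmr : m ≤ r)
    {z : O} : f (ϖ ^ m) * z ∈ ordSet f ϖ β r ↔ z ∈ ordSet f ϖ β (r - m) := by
  obtain ⟨x, y, rfl⟩ := hgen z
  have hz : f (ϖ ^ m) * (f x + f y * β) = f (ϖ ^ m * x) + f (ϖ ^ m * y) * β := by
    simp only [map_mul]
    ring
  rw [hz, map_add_map_mul_mem_ordSet_iff hf hβ, map_add_map_mul_mem_ordSet_iff hf hβ,
    ← pow_mul_pow_sub ϖ hmr, mul_dvd_mul_iff_left (pow_ne_zero m hϖ0)]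

theorem map_mem_ordSet (hgen : ∀ z : O, ∃ x y : o, z = f x + f y * β)
    (hσf : ∀ x : o, σ (f x) = f x) {r : ℕ} {z : O} (hz : z ∈ ordSet f ϖ β r) :
    σ z ∈ ordSet f ϖ β r := by
  obtain ⟨a, b, hσβ⟩ := hgen (σ β)
  obtain ⟨x, y, rfl⟩ := hz
  refine ⟨x + ϖ ^ r * y * a, y * b, ?_⟩
  simp only [map_add, map_mul, map_pow, hσf, hσβ]
  ring

theorem mem_ordUnits_iff (hgen : ∀ z : O, ∃ x y : o, z = f x + f y * β)
    (hσf : ∀ x : o, σ (f x) = f x) (hNr : ∀ z : O, f (Nr z) = z * σ z)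
    {r : ℕ} {z : O} : z ∈ ordUnits f ϖ β r ↔ z ∈ ordSet f ϖ β r ∧ IsUnit z := by
  refine ⟨fun ⟨hz, w, _, hzw⟩ => ⟨hz, .of_mul_eq_one w hzw⟩, fun ⟨hz, hu⟩ => ⟨hz, ?_⟩⟩
  -- The inverse of `z` is `σ z / Nr z`.
  obtain ⟨c, hc⟩ := hu.map Nr
  refine ⟨f ↑c⁻¹ * σ z, map_mul_mem_ordSet _ (map_mem_ordSet hgen hσf hz), ?_⟩
  calc z * (f ↑c⁻¹ * σ z) = f ↑c⁻¹ * f (Nr z) := by rw [hNr]; ring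
    _ = 1 := by rw [← hc, ← map_mul, Units.inv_mul, map_one]

theorem norm_map_eq_mul_self (hf : Function.Injective f) (hσf : ∀ x : o, σ (f x) = f x)
    (hNr : ∀ z : O, f (Nr z) = z * σ z) (a : o) : Nr (f a) = a * a :=
  hf (by rw [hNr, hσf, map_mul])

theorem exists_norm_eq_pow_mul_unit_iff [IsDomain o] [IsDiscreteValuationRing o]
    [IsDomain O] [IsDiscreteValuationRing O] (hf : Function.Injective f)
    (hσf : ∀ x : o, σ (f x) = f x) (hNr : ∀ z : O, f (Nr z) = z * σ z)
    (hϖ : Irreducible ϖ) (hunram : Irreducible (f ϖ)) {z : O} {n : ℕ} :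
    (∃ u : oˣ, Nr z = ϖ ^ n * u) ↔ ∃ m, n = 2 * m ∧ ∃ w : Oˣ, z = f (ϖ ^ m) * w := by
  constructor
  · rintro ⟨u, hu⟩
    have hz : z ≠ 0 := by
      rintro rfl
      have hN0 : Nr 0 = 0 := hf (by rw [hNr, zero_mul, map_zero])
      exact mul_ne_zero (pow_ne_zero n hϖ.ne_zero) u.ne_zero (hu ▸ hN0)
    obtain ⟨m, w, rfl⟩ := IsDiscreteValuationRing.eq_unit_mul_pow_irreducible hz hunram
    obtain ⟨v, hv⟩ := w.isUnit.map Nr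
    refine ⟨m, IsDiscreteValuationRing.unit_mul_pow_congr_pow hϖ hϖ u v n (2 * m) ?_,
      w, by rw [map_pow, mul_comm]⟩
    rw [mul_comm, ← hu, map_mul, map_pow, norm_map_eq_mul_self hf hσf hNr, hv]
    ring
  · rintro ⟨m, rfl, w, rfl⟩
    obtain ⟨v, hv⟩ := w.isUnit.map Nr
    exact ⟨v, by rw [map_mul, norm_map_eq_mul_self hf hσf hNr, hv]; ring⟩

theorem exists_mem_ordSet_map_pow_mul_eq_iff [IsDomain o] [ValuationRing o] [IsDomain O]
    [IsLocalHom f] (hf : Function.Injective f) (hβ : β ∉ Set.range f)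
    (hgen : ∀ z : O, ∃ x y : o, z = f x + f y * β) (hϖ0 : ϖ ≠ 0) {m r : ℕ} (hm : 1 ≤ m)
    (hmr : m ≤ r) {w : O} :
    (∃ s ∈ ordSet f ϖ β r, f (ϖ ^ m) * w = f ϖ * s) ↔ w ∈ ordSet f ϖ β (r - m + 1) := by
  have hw : f (ϖ ^ m) * w = f ϖ * (f (ϖ ^ (m - 1)) * w) := by
    rw [← mul_assoc, ← map_mul, ← pow_succ', Nat.sub_add_cancel hm]
  have hfϖ : f ϖ ≠ 0 := (map_ne_zero_iff f hf).mpr hϖ0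
  simp only [hw, mul_right_inj' hfϖ, exists_eq_right']
  rw [map_pow_mul_mem_ordSet_iff hf hβ hgen hϖ0 (by omega), show r - (m - 1) = r - m + 1 by omega]

theorem ordLayer_eq_empty [IsDomain o] [IsDiscreteValuationRing o] [IsDomain O]
    [IsDiscreteValuationRing O] (hf : Function.Injective f) (hϖ : Irreducible ϖ)
    (hgen : ∀ z : O, ∃ x y : o, z = f x + f y * β) (hσf : ∀ x : o, σ (f x) = f x)
    (hNr : ∀ z : O, f (Nr z) = z * σ z) (hunram : Irreducible (f ϖ)) {r n : ℕ}
    (h : Odd n ∨ 2 * r < n) : ordLayer f ϖ β Nr r n = ∅ := by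
  refine Set.eq_empty_of_forall_notMem fun z ⟨_, hndvd, hN⟩ => ?_
  obtain ⟨m, rfl, w, rfl⟩ := (exists_norm_eq_pow_mul_unit_iff hf hσf hNr hϖ hunram).mp hN
  rcases h with hodd | hlt
  · exact Nat.not_odd_iff_even.mpr (even_two_mul m) hodd
  · refine hndvd ⟨f (ϖ ^ r) * (f (ϖ ^ (m - 1 - r)) * w), map_pow_mul_mem_ordSet hgen r _, ?_⟩
    rw [← mul_assoc, ← mul_assoc, ← map_mul, ← map_mul, ← pow_succ', ← pow_add]
    congr 3
    omega

theorem ordLayer_zero [IsDomain o] [IsDiscreteValuationRing o] [IsDomain O]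
    [IsDiscreteValuationRing O] (hf : Function.Injective f) (hϖ : Irreducible ϖ)
    (hgen : ∀ z : O, ∃ x y : o, z = f x + f y * β) (hσf : ∀ x : o, σ (f x) = f x)
    (hNr : ∀ z : O, f (Nr z) = z * σ z) (hunram : Irreducible (f ϖ)) (r : ℕ) :
    ordLayer f ϖ β Nr r 0 = ordUnits f ϖ β r := by
  have hunit {z : O} : (∃ u : oˣ, Nr z = ϖ ^ 0 * u) ↔ IsUnit z := by
    rw [exists_norm_eq_pow_mul_unit_iff hf hσf hNr hϖ hunram]
    constructor
    · rintro ⟨m, hm, w, rfl⟩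
      obtain rfl : m = 0 := by omega
      simp
    · exact fun hz => ⟨0, rfl, hz.unit, by simp⟩
  ext z
  rw [mem_ordUnits_iff hgen hσf hNr]
  refine ⟨fun ⟨hz, _, hN⟩ => ⟨hz, hunit.mp hN⟩, fun ⟨hz, hu⟩ => ⟨hz, ?_, hunit.mpr hu⟩⟩
  rintro ⟨s, -, rfl⟩
  exact hunram.not_isUnit (isUnit_of_mul_isUnit_left hu)

theorem ordLayer_two_mul [IsDomain o] [IsDiscreteValuationRing o] [IsDomain O]
    [IsDiscreteValuationRing O] (hf : Function.Injective f) (hϖ : Irreducible ϖ)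
    (hβ : β ∉ Set.range f) (hgen : ∀ z : O, ∃ x y : o, z = f x + f y * β)
    (hσf : ∀ x : o, σ (f x) = f x) (hNr : ∀ z : O, f (Nr z) = z * σ z)
    (hunram : Irreducible (f ϖ)) {r m : ℕ} (hm : 1 ≤ m) (hmr : m ≤ r) :
    ordLayer f ϖ β Nr r (2 * m) =
      (fun z => f (ϖ ^ m) * z) '' (ordUnits f ϖ β (r - m) \ ordUnits f ϖ β (r - m + 1)) := by
  have := isLocalHom_of_not_isUnit_map_irreducible hϖ hunram.not_isUnit
  have hmem {w : O} := map_pow_mul_mem_ordSet_iff hf hβ hgen hϖ.ne_zero hmr (z := w)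
  have hdiv {w : O} := exists_mem_ordSet_map_pow_mul_eq_iff hf hβ hgen hϖ.ne_zero hm hmr (w := w)
  have hnorm {z : O} := exists_norm_eq_pow_mul_unit_iff hf hσf hNr hϖ hunram (z := z) (n := 2 * m)
  ext z
  simp only [Set.mem_image, Set.mem_sdiff, mem_ordUnits_iff hgen hσf hNr]
  constructor
  · rintro ⟨hz, hndvd, hN⟩
    obtain ⟨k, hk, w, rfl⟩ := hnorm.mp hN
    obtain rfl : k = m := by omega
    exact ⟨w, ⟨⟨hmem.mp hz, w.isUnit⟩, fun hw => hndvd (hdiv.mpr hw.1)⟩, rfl⟩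
  · rintro ⟨w, ⟨⟨hw, hu⟩, hw'⟩, rfl⟩
    exact ⟨hmem.mpr hw, fun h => hw' ⟨hdiv.mp h, hu⟩, hnorm.mpr ⟨m, rfl, hu.unit, rfl⟩⟩

end Orders

theorem stmt_3_general {o O : Type*} [CommRing o] [IsDomain o] [IsDiscreteValuationRing o]
    [CommRing O] [IsDomain O] [IsDiscreteValuationRing O]
    (f : o →+* O) (hf : Function.Injective f)
    (ϖ : o) (hϖ : Irreducible ϖ)
    (β : O) (hβ : β ∉ Set.range f)
    (hgen : ∀ z : O, ∃ x y : o, z = f x + f y * β)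
    (σ : O →+* O) (hσf : ∀ x : o, σ (f x) = f x)
    (Nr : O →* o) (hNr : ∀ z : O, f (Nr z) = z * σ z)
    (hunram : Irreducible (f ϖ))
    (r n : ℕ) :
    ((Odd n ∨ 2 * r < n) → ordLayer f ϖ β Nr r n = ∅) ∧
    (ordLayer f ϖ β Nr r 0 = ordUnits f ϖ β r) ∧
    (Even n → 0 < n → n ≤ 2 * r →
      ordLayer f ϖ β Nr r n =
        (fun z => f (ϖ ^ (n / 2)) * z) ''
          (ordUnits f ϖ β (r - n / 2) \ ordUnits f ϖ β (r - n / 2 + 1))) := by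
  refine ⟨ordLayer_eq_empty hf hϖ hgen hσf hNr hunram,
    ordLayer_zero hf hϖ hgen hσf hNr hunram r, ?_⟩
  rintro ⟨m, rfl⟩ hpos hle
  rw [← two_mul, Nat.mul_div_cancel_left m two_pos]
  exact ordLayer_two_mul hf hϖ hβ hgen hσf hNr hunram (by omega) (by omega)

/-- If `E/F` is an unramified quadratic field extension then for all
`r, n ∈ ℕ`: (i) `𝒪_r^{(n)} = ∅` if `n` is odd or `n > 2r`; (ii) `𝒪_r^{(0)} = 𝒪_r^×`;
(iii) `𝒪_r^{(n)} = ϖ^{n/2}·(𝒪_{r−n/2}^× ∖ 𝒪_{r−n/2+1}^×)` if `n` is even and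
`0 < n ≤ 2r`. -/
theorem stmt_3 {o O : Type*} [CommRing o] [IsDomain o] [IsDiscreteValuationRing o]
    [CommRing O] [IsDomain O] [IsDiscreteValuationRing O]
    (f : o →+* O) (hf : Function.Injective f)
    (ϖ : o) (hϖ : Irreducible ϖ)
    (β : O) (hβ : β ∉ Set.range f)
    (hgen : ∀ z : O, ∃ x y : o, z = f x + f y * β)
    (σ : O →+* O) (hσf : ∀ x : o, σ (f x) = f x) (hσσ : ∀ z : O, σ (σ z) = z)
    (Nr : O →* o) (hNr : ∀ z : O, f (Nr z) = z * σ z)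
    (hβunit : IsUnit (Nr β))
    (hunram : Irreducible (f ϖ))
    (r n : ℕ) :
    ((Odd n ∨ 2 * r < n) → ordLayer f ϖ β Nr r n = ∅) ∧
    (ordLayer f ϖ β Nr r 0 = ordUnits f ϖ β r) ∧
    (Even n → 0 < n → n ≤ 2 * r →
      ordLayer f ϖ β Nr r n =
        (fun z => f (ϖ ^ (n / 2)) * z) ''
          (ordUnits f ϖ β (r - n / 2) \ ordUnits f ϖ β (r - n / 2 + 1))) :=
  stmt_3_general f hf ϖ hϖ β hβ hgen σ hσf Nr hNr hunram r n
end

section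
/- Let E/F be a ramified quadratic field extension and ϖ_E a uniformizer of 𝒪. Then for all r, n ∈ ℕ: (i) 𝒪_r^{(n)} = ∅ if n > 2r+1, or if 0 ≤ n ≤ 2r and n is odd; (ii) 𝒪_r^{(0)} = 𝒪_r^×; (iii) 𝒪_r^{(n)} = ϖ^{n/2}·(𝒪_{r−n/2}^× ∖ 𝒪_{r−n/2+1}^×) if n is even and 0 < n ≤ 2r; (iv) 𝒪_r^{(2r+1)} = ϖ_E^{2r+1}𝒪^×. -/
/-! Writing `ϖ_E` for a uniformizer of `𝒪`, ramification means `v_E ∘ f = 2 v_F`, so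
`𝒪 = 𝔬 + 𝔬ϖ_E` and `v_E (f s + f t ϖ_E) = min (2 v_F s) (2 v_F t + 1)`, the two terms having
valuations of different parity. In these coordinates `𝒪_r = {f s + f (ϖ^r t) ϖ_E}`, and such an
element lies outside `ϖ𝒪_r` iff `s` or `t` is a unit. Since `f (Nr z) = z σ(z)` and `σ` preserves
`v_E`, the condition `Nr z ∈ ϖⁿ𝔬^×` says `v_E z = n`, so each layer `𝒪_r^{(n)}` is cut out by
`min (2 v_F s) (2 r + 2 v_F t + 1) = n`, and all four assertions are arithmetic in `ℕ∞`. -/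

open IsDiscreteValuationRing

namespace ENat

theorem eq_top_of_two_mul_eq_two_mul_add_one {a b : ℕ∞} (h : 2 * a = 2 * b + 1) :
    a = ⊤ ∧ b = ⊤ := by
  induction a using recTopCoe <;> induction b using recTopCoe <;> simp_all <;>
    norm_cast at *
  omega

theorem min_two_mul_two_mul_add_one_eq_zero {a b : ℕ∞} : min (2 * a) (2 * b + 1) = 0 ↔ a = 0 := by
  induction a using recTopCoe <;> induction b using recTopCoe <;> simp_all [min_eq_iff]

theorem le_and_odd_imp_of_min_two_mul_eq {a b : ℕ∞} {r n : ℕ} (hab : a = 0 ∨ b = 0)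
    (h : min (2 * a) (2 * (r + b) + 1) = n) : n ≤ 2 * r + 1 ∧ (Odd n → n = 2 * r + 1) := by
  induction a using recTopCoe <;> induction b using recTopCoe <;>
    simp_all [min_eq_iff, Nat.odd_iff] <;> norm_cast at * <;> omega

theorem min_two_mul_eq_two_mul_iff {a b : ℕ∞} {r l : ℕ} (hl : 0 < l) (hlr : l ≤ r) :
    (a = 0 ∨ b = 0) ∧ min (2 * a) (2 * (r + b) + 1) = ↑(2 * l) ↔ a = l ∧ b = 0 := by
  induction a using recTopCoe <;> induction b using recTopCoe <;>
    simp_all [min_eq_iff] <;> norm_cast at * <;> omega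

theorem eq_of_min_two_mul_eq_two_mul_add_one {a b : ℕ∞} {r : ℕ}
    (h : min (2 * a) (2 * b + 1) = ↑(2 * r + 1)) : b = r := by
  induction a using recTopCoe <;> induction b using recTopCoe <;>
    simp_all [min_eq_iff] <;> norm_cast at * <;> omega

end ENat

section DVR

variable {o O : Type*} [CommRing o] [IsDomain o] [IsDiscreteValuationRing o]
  [CommRing O] [IsDomain O] [IsDiscreteValuationRing O]

theorem Irreducible.dvd_iff_addVal_ne_zero {ϖ x : o} (hϖ : Irreducible ϖ) :
    ϖ ∣ x ↔ addVal o x ≠ 0 := by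
  rw [← addVal_le_iff_dvd, addVal_uniformizer hϖ, Order.one_le_iff_ne_zero]

theorem exists_units_eq_pow_mul_iff {ϖ x : o} (hϖ : Irreducible ϖ) {n : ℕ} :
    (∃ u : oˣ, x = ϖ ^ n * u) ↔ addVal o x = n := by
  constructor
  · rintro ⟨u, rfl⟩
    rw [mul_comm, addVal_def' u hϖ]
  · intro hx
    have hx0 : x ≠ 0 := by rintro rfl; simp at hx
    obtain ⟨m, u, rfl⟩ := eq_unit_mul_pow_irreducible hx0 hϖ
    rw [addVal_def' u hϖ, Nat.cast_inj] at hx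
    exact ⟨u, by rw [hx, mul_comm]⟩

theorem addVal_map_eq_two_mul {f : o →+* O} {ϖ : o} {ϖE : O} (hϖ : Irreducible ϖ)
    (hϖE : Irreducible ϖE) (hram : Associated (f ϖ) (ϖE ^ 2)) (x : o) :
    addVal O (f x) = 2 * addVal o x := by
  rcases eq_or_ne x 0 with rfl | hx
  · simp
  obtain ⟨n, u, rfl⟩ := eq_unit_mul_pow_irreducible hx hϖ
  obtain ⟨w, hw⟩ := hram
  have hfϖ : f ϖ = ϖE ^ 2 * ↑w⁻¹ := by rw [← hw, mul_assoc, Units.mul_inv, mul_one]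
  have : f (↑u * ϖ ^ n) = ↑(u.map f.toMonoidHom * w⁻¹ ^ n) * ϖE ^ (2 * n) := by
    rw [map_mul, map_pow, hfϖ, pow_mul]; simp [mul_pow]; ring
  rw [this, addVal_def' _ hϖE, addVal_def' _ hϖ]; push_cast; ring

theorem addVal_map_of_involutive {σ : O →+* O} (hσ : Function.Involutive σ) (z : O) :
    addVal O (σ z) = addVal O z := by
  let e : O ≃+* O := RingEquiv.ofBijective σ hσ.bijective
  rcases eq_or_ne z 0 with rfl | hz
  · simp
  obtain ⟨ϖE, hϖE⟩ := exists_irreducible O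
  obtain ⟨n, u, rfl⟩ := eq_unit_mul_pow_irreducible hz hϖE
  have : σ (↑u * ϖE ^ n) = ↑(u.map σ.toMonoidHom) * e ϖE ^ n := by simp [e]
  rw [this, addVal_def' _ (hϖE.map e), addVal_def' _ hϖE]

theorem addVal_norm {f : o →+* O} (hf2 : ∀ x, addVal O (f x) = 2 * addVal o x)
    {σ : O →+* O} (hσ : Function.Involutive σ) {Nr : O →* o}
    (hNr : ∀ z : O, f (Nr z) = z * σ z) (z : O) : addVal o (Nr z) = addVal O z := by
  have h : 2 * addVal o (Nr z) = 2 * addVal O z := by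
    rw [← hf2, hNr, addVal_mul, addVal_map_of_involutive hσ, two_mul]
  exact (ENat.mul_right_strictMono two_ne_zero (by simp)).injective h

end DVR

section Coordinates

variable {o O : Type*} [CommRing o] [IsDomain o] [IsDiscreteValuationRing o]
  [CommRing O] [IsDomain O] [IsDiscreteValuationRing O] {f : o →+* O} {ϖE : O}

theorem addVal_add_mul_eq_min (hϖE : Irreducible ϖE)
    (hf2 : ∀ x, addVal O (f x) = 2 * addVal o x) (s t : o) :
    addVal O (f s + f t * ϖE) = min (2 * addVal o s) (2 * addVal o t + 1) := by
  have ht : addVal O (f t * ϖE) = 2 * addVal o t + 1 := by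
    rw [addVal_mul, hf2, addVal_uniformizer hϖE]
  rw [← hf2, ← ht]
  by_cases h : addVal O (f s) = addVal O (f t * ϖE)
  · rw [hf2, ht] at h
    obtain ⟨hs, ht⟩ := ENat.eq_top_of_two_mul_eq_two_mul_add_one h
    simp [addVal_eq_top_iff.mp hs, addVal_eq_top_iff.mp ht]
  · exact AddValuation.map_add_of_distinct_val _ h

theorem add_mul_uniformizer_inj (hϖE : Irreducible ϖE)
    (hf2 : ∀ x, addVal O (f x) = 2 * addVal o x) {s t s' t' : o}
    (h : f s + f t * ϖE = f s' + f t' * ϖE) : s = s' ∧ t = t' := by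
  have heq : f (s - s') = -f (t - t') * ϖE := by
    simp only [map_sub]; linear_combination h
  have hval := congrArg (addVal O) heq
  rw [hf2, neg_mul, AddValuation.map_neg, addVal_mul, hf2, addVal_uniformizer hϖE] at hval
  obtain ⟨hs, ht⟩ := ENat.eq_top_of_two_mul_eq_two_mul_add_one hval
  rw [addVal_eq_top_iff, sub_eq_zero] at hs ht
  exact ⟨hs, ht⟩

theorem isUnit_add_mul_iff (hϖE : Irreducible ϖE) (hf2 : ∀ x, addVal O (f x) = 2 * addVal o x)
    {s t : o} : IsUnit (f s + f t * ϖE) ↔ IsUnit s := by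
  rw [← addVal_eq_zero_iff, ← addVal_eq_zero_iff, addVal_add_mul_eq_min hϖE hf2,
    ENat.min_two_mul_two_mul_add_one_eq_zero]

theorem exists_eq_add_mul_uniformizer {ϖ : o} {β : O} (hϖ : Irreducible ϖ)
    (hϖE : Irreducible ϖE) (hf2 : ∀ x, addVal O (f x) = 2 * addVal o x)
    (hgen : ∀ z : O, ∃ x y : o, z = f x + f y * β) (z : O) :
    ∃ s t : o, z = f s + f t * ϖE := by
  obtain ⟨x₀, y₀, hϖE₀⟩ := hgen ϖE
  -- otherwise `ϖ_E ≡ f x₀` modulo `f ϖ ∼ ϖ_E²`, and `v_E (f x₀)` would be the odd number `1`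
  have hy₀ : IsUnit y₀ := by
    by_contra hy
    obtain ⟨y₁, rfl⟩ := hϖ.dvd_iff_addVal_ne_zero.mpr (mt addVal_eq_zero_iff.mp hy)
    have hlt : addVal O ϖE < addVal O (f x₀ - ϖE) := by
      have : f x₀ - ϖE = -(f ϖ * (f y₁ * β)) := by rw [hϖE₀, map_mul]; ring
      rw [this, AddValuation.map_neg, addVal_mul, hf2, addVal_uniformizer hϖ,
        addVal_uniformizer hϖE]
      exact lt_of_lt_of_le (by norm_num) le_self_add
    have h1 := AddValuation.map_eq_of_lt_sub _ hlt
    rw [hf2, addVal_uniformizer hϖE] at h1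
    simp at h1
  obtain ⟨x, y, rfl⟩ := hgen z
  refine ⟨x - y * hy₀.unit⁻¹ * x₀, y * hy₀.unit⁻¹, ?_⟩
  have hβ : f y₀ * β = ϖE - f x₀ := by rw [hϖE₀]; ring
  have hy : f ↑hy₀.unit⁻¹ * f y₀ = 1 := by rw [← map_mul, IsUnit.val_inv_mul, map_one]
  simp only [map_mul, map_sub]
  linear_combination (f y * f ↑hy₀.unit⁻¹) * hβ - f y * β * hy

end Coordinates

section Orders

variable {o O : Type*} [CommRing o] [CommRing O] {f : o →+* O} {ϖ : o} {β γ : O}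

theorem mem_ordSet_iff (hgen : ∀ z : O, ∃ x y : o, z = f x + f y * β) {r : ℕ} {z : O} :
    z ∈ ordSet f ϖ β r ↔ ∃ x w, z = f x + f (ϖ ^ r) * w := by
  constructor
  · rintro ⟨x, y, rfl⟩
    exact ⟨x, f y * β, by rw [map_mul]; ring⟩
  · rintro ⟨x, w, rfl⟩
    obtain ⟨x', y', rfl⟩ := hgen w
    exact ⟨x + ϖ ^ r * x', y', by simp only [map_add, map_mul]; ring⟩

theorem ordSet_eq_of_generates (hβ : ∀ z : O, ∃ x y : o, z = f x + f y * β)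
    (hγ : ∀ z : O, ∃ x y : o, z = f x + f y * γ) : ordSet f ϖ β = ordSet f ϖ γ := by
  ext r z
  rw [mem_ordSet_iff hβ, mem_ordSet_iff hγ]

theorem ordUnits_congr (h : ordSet f ϖ β = ordSet f ϖ γ) : ordUnits f ϖ β = ordUnits f ϖ γ := by
  ext r z
  simp only [ordUnits, h]

theorem ordLayer_congr (h : ordSet f ϖ β = ordSet f ϖ γ) (Nr : O →* o) :
    ordLayer f ϖ β Nr = ordLayer f ϖ γ Nr := by
  ext r n z
  simp only [ordLayer, h]

end Orders

section Layers

variable {o O : Type*} [CommRing o] [IsDomain o] [IsDiscreteValuationRing o]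
  [CommRing O] [IsDomain O] [IsDiscreteValuationRing O] {f : o →+* O} {ϖ : o} {ϖE : O}

theorem add_mul_mem_ordSet_iff (hϖE : Irreducible ϖE)
    (hf2 : ∀ x, addVal O (f x) = 2 * addVal o x) {r : ℕ} {s t : o} :
    f s + f t * ϖE ∈ ordSet f ϖ ϖE r ↔ ϖ ^ r ∣ t := by
  constructor
  · rintro ⟨x, y, h⟩
    exact ⟨y, (add_mul_uniformizer_inj hϖE hf2 h).2⟩
  · rintro ⟨y, rfl⟩
    exact ⟨s, y, rfl⟩

theorem exists_mem_ordSet_eq_mul_iff (hϖ : Irreducible ϖ) (hϖE : Irreducible ϖE)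
    (hf2 : ∀ x, addVal O (f x) = 2 * addVal o x) {r : ℕ} {s t : o} :
    (∃ w ∈ ordSet f ϖ ϖE r, f s + f (ϖ ^ r * t) * ϖE = f ϖ * w) ↔ ϖ ∣ s ∧ ϖ ∣ t := by
  constructor
  · rintro ⟨_, ⟨x, y, rfl⟩, h⟩
    have h' : f s + f (ϖ ^ r * t) * ϖE = f (ϖ * x) + f (ϖ ^ r * (ϖ * y)) * ϖE := by
      rw [h]; simp only [map_mul]; ring
    obtain ⟨hs, ht⟩ := add_mul_uniformizer_inj hϖE hf2 h'
    exact ⟨⟨x, hs⟩, ⟨y, mul_left_cancel₀ (pow_ne_zero r hϖ.ne_zero) ht⟩⟩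
  · rintro ⟨⟨x, rfl⟩, ⟨y, rfl⟩⟩
    exact ⟨f x + f (ϖ ^ r * y) * ϖE, ⟨x, y, rfl⟩, by simp only [map_mul]; ring⟩

theorem mem_ordUnits_iff_s4 (hϖE : Irreducible ϖE) (hf2 : ∀ x, addVal O (f x) = 2 * addVal o x)
    (hcoord : ∀ z : O, ∃ s t : o, z = f s + f t * ϖE) {r : ℕ} {z : O} :
    z ∈ ordUnits f ϖ ϖE r ↔ z ∈ ordSet f ϖ ϖE r ∧ IsUnit z := by
  refine ⟨fun ⟨hz, w, _, hzw⟩ => ⟨hz, .of_mul_eq_one w hzw⟩, fun ⟨hz, hu⟩ => ⟨hz, ?_⟩⟩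
  obtain ⟨s, t, rfl⟩ := hz
  have hs : IsUnit s := (isUnit_add_mul_iff hϖE hf2).mp hu
  obtain ⟨u, hzu⟩ := hu.exists_right_inv
  obtain ⟨s', hss'⟩ := hs.exists_right_inv
  -- `u - f s'` equals `(f s - z) u f s'`, a multiple of `f (ϖ ^ r)`
  refine ⟨u, (mem_ordSet_iff hcoord).mpr ⟨s', -(f t * ϖE * u * f s'), ?_⟩, hzu⟩
  have hsc : f s * f s' = 1 := by rw [← map_mul, hss', map_one]
  rw [map_mul] at hzu
  linear_combination f s' * hzu - u * hsc

theorem mem_ordLayer_iff_addVal (hϖ : Irreducible ϖ) (hf2 : ∀ x, addVal O (f x) = 2 * addVal o x)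
    {σ : O →+* O} (hσ : Function.Involutive σ) {Nr : O →* o}
    (hNr : ∀ z : O, f (Nr z) = z * σ z) {r n : ℕ} {z : O} :
    z ∈ ordLayer f ϖ ϖE Nr r n ↔
      z ∈ ordSet f ϖ ϖE r ∧ (¬ ∃ w ∈ ordSet f ϖ ϖE r, z = f ϖ * w) ∧ addVal O z = n := by
  rw [ordLayer, Set.mem_ofPred_eq, exists_units_eq_pow_mul_iff hϖ, addVal_norm hf2 hσ hNr]

theorem add_mul_mem_ordLayer_iff (hϖ : Irreducible ϖ) (hϖE : Irreducible ϖE)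
    (hf2 : ∀ x, addVal O (f x) = 2 * addVal o x) {σ : O →+* O} (hσ : Function.Involutive σ)
    {Nr : O →* o} (hNr : ∀ z : O, f (Nr z) = z * σ z) {r n : ℕ} {s t : o} :
    f s + f (ϖ ^ r * t) * ϖE ∈ ordLayer f ϖ ϖE Nr r n ↔
      (addVal o s = 0 ∨ addVal o t = 0) ∧ min (2 * addVal o s) (2 * (r + addVal o t) + 1) = n := by
  rw [mem_ordLayer_iff_addVal hϖ hf2 hσ hNr, exists_mem_ordSet_eq_mul_iff hϖ hϖE hf2,
    hϖ.dvd_iff_addVal_ne_zero, hϖ.dvd_iff_addVal_ne_zero, addVal_add_mul_eq_min hϖE hf2,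
    addVal_mul, hϖ.addVal_pow, not_and_or, not_ne_iff, not_ne_iff]
  exact and_iff_right ⟨s, t, rfl⟩

theorem ordLayer_eq_empty_s4 (hϖ : Irreducible ϖ) (hϖE : Irreducible ϖE)
    (hf2 : ∀ x, addVal O (f x) = 2 * addVal o x) {σ : O →+* O} (hσ : Function.Involutive σ)
    {Nr : O →* o} (hNr : ∀ z : O, f (Nr z) = z * σ z) {r n : ℕ}
    (hn : 2 * r + 1 < n ∨ (n ≤ 2 * r ∧ Odd n)) : ordLayer f ϖ ϖE Nr r n = ∅ := by
  refine Set.eq_empty_of_forall_notMem fun z hz => ?_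
  obtain ⟨s, t, rfl⟩ := hz.1
  obtain ⟨hunit, hval⟩ := (add_mul_mem_ordLayer_iff hϖ hϖE hf2 hσ hNr).mp hz
  have := ENat.le_and_odd_imp_of_min_two_mul_eq hunit hval
  grind

theorem ordLayer_zero_s4 (hϖ : Irreducible ϖ) (hϖE : Irreducible ϖE)
    (hf2 : ∀ x, addVal O (f x) = 2 * addVal o x) (hcoord : ∀ z : O, ∃ s t : o, z = f s + f t * ϖE)
    {σ : O →+* O} (hσ : Function.Involutive σ) {Nr : O →* o}
    (hNr : ∀ z : O, f (Nr z) = z * σ z) {r : ℕ} :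
    ordLayer f ϖ ϖE Nr r 0 = ordUnits f ϖ ϖE r := by
  ext z
  rw [mem_ordUnits_iff_s4 hϖE hf2 hcoord]
  by_cases hz : z ∈ ordSet f ϖ ϖE r
  · obtain ⟨s, t, rfl⟩ := hz
    rw [add_mul_mem_ordLayer_iff hϖ hϖE hf2 hσ hNr, isUnit_add_mul_iff hϖE hf2,
      ← addVal_eq_zero_iff, Nat.cast_zero, ENat.min_two_mul_two_mul_add_one_eq_zero]
    exact ⟨fun h => ⟨⟨s, t, rfl⟩, h.2⟩, fun h => ⟨.inl h.2, h.2⟩⟩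
  · exact iff_of_false (fun h => hz h.1) (fun h => hz h.1)

theorem mem_ordUnits_diff_iff (hϖ : Irreducible ϖ) (hϖE : Irreducible ϖE)
    (hf2 : ∀ x, addVal O (f x) = 2 * addVal o x) (hcoord : ∀ z : O, ∃ s t : o, z = f s + f t * ϖE)
    {k : ℕ} {w : O} :
    w ∈ ordUnits f ϖ ϖE k \ ordUnits f ϖ ϖE (k + 1) ↔
      ∃ s t : o, IsUnit s ∧ IsUnit t ∧ w = f s + f (ϖ ^ k * t) * ϖE := by
  simp only [Set.mem_sdiff, mem_ordUnits_iff_s4 hϖE hf2 hcoord]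
  constructor
  · rintro ⟨⟨⟨s, t, rfl⟩, hu⟩, hnot⟩
    refine ⟨s, t, (isUnit_add_mul_iff hϖE hf2).mp hu, ?_, rfl⟩
    by_contra ht
    obtain ⟨t', rfl⟩ := hϖ.dvd_iff_addVal_ne_zero.mpr (mt addVal_eq_zero_iff.mp ht)
    exact hnot ⟨⟨s, t', by rw [pow_succ, mul_assoc]⟩, hu⟩
  · rintro ⟨s, t, hs, ht, rfl⟩
    refine ⟨⟨⟨s, t, rfl⟩, (isUnit_add_mul_iff hϖE hf2).mpr hs⟩, fun ⟨hmem, _⟩ => ?_⟩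
    obtain ⟨t', ht'⟩ := (add_mul_mem_ordSet_iff hϖE hf2).mp hmem
    rw [pow_succ, mul_assoc] at ht'
    exact hϖ.not_isUnit
      (isUnit_of_dvd_unit ⟨t', mul_left_cancel₀ (pow_ne_zero k hϖ.ne_zero) ht'⟩ ht)

theorem ordLayer_two_mul_s4 (hϖ : Irreducible ϖ) (hϖE : Irreducible ϖE)
    (hf2 : ∀ x, addVal O (f x) = 2 * addVal o x) (hcoord : ∀ z : O, ∃ s t : o, z = f s + f t * ϖE)
    {σ : O →+* O} (hσ : Function.Involutive σ) {Nr : O →* o}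
    (hNr : ∀ z : O, f (Nr z) = z * σ z) {r l : ℕ} (hl : 0 < l) (hlr : l ≤ r) :
    ordLayer f ϖ ϖE Nr r (2 * l) =
      (fun z => f (ϖ ^ l) * z) '' (ordUnits f ϖ ϖE (r - l) \ ordUnits f ϖ ϖE (r - l + 1)) := by
  have hscale (s t : o) : f (ϖ ^ l) * (f s + f (ϖ ^ (r - l) * t) * ϖE) =
      f (ϖ ^ l * s) + f (ϖ ^ r * t) * ϖE := by
    rw [← Nat.add_sub_cancel' hlr, pow_add, Nat.add_sub_cancel_left]
    simp only [map_mul]; ring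
  ext z
  simp only [Set.mem_image, mem_ordUnits_diff_iff hϖ hϖE hf2 hcoord]
  constructor
  · intro hz
    obtain ⟨s, t, rfl⟩ := hz.1
    rw [add_mul_mem_ordLayer_iff hϖ hϖE hf2 hσ hNr, ENat.min_two_mul_eq_two_mul_iff hl hlr] at hz
    obtain ⟨u, rfl⟩ := (exists_units_eq_pow_mul_iff hϖ).mpr hz.1
    exact ⟨_, ⟨u, t, u.isUnit, addVal_eq_zero_iff.mp hz.2, rfl⟩, hscale _ _⟩
  · rintro ⟨_, ⟨s, t, hs, ht, rfl⟩, rfl⟩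
    rw [hscale, add_mul_mem_ordLayer_iff hϖ hϖE hf2 hσ hNr, ENat.min_two_mul_eq_two_mul_iff hl hlr,
      addVal_mul, hϖ.addVal_pow, addVal_eq_zero_iff.mpr hs, addVal_eq_zero_iff.mpr ht, add_zero]
    exact ⟨rfl, rfl⟩

theorem ordLayer_two_mul_add_one (hϖ : Irreducible ϖ) (hϖE : Irreducible ϖE)
    (hf2 : ∀ x, addVal O (f x) = 2 * addVal o x) (hcoord : ∀ z : O, ∃ s t : o, z = f s + f t * ϖE)
    {σ : O →+* O} (hσ : Function.Involutive σ) {Nr : O →* o}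
    (hNr : ∀ z : O, f (Nr z) = z * σ z) {r : ℕ} :
    ordLayer f ϖ ϖE Nr r (2 * r + 1) = (fun z => ϖE ^ (2 * r + 1) * z) '' {z : O | IsUnit z} := by
  ext z
  have hunits : z ∈ (fun z => ϖE ^ (2 * r + 1) * z) '' {z : O | IsUnit z} ↔
      addVal O z = ↑(2 * r + 1) := by
    rw [← exists_units_eq_pow_mul_iff hϖE]
    exact ⟨fun ⟨w, hw, hwz⟩ => ⟨hw.unit, hwz.symm⟩, fun ⟨u, hu⟩ => ⟨u, u.isUnit, hu.symm⟩⟩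
  rw [hunits, mem_ordLayer_iff_addVal hϖ hf2 hσ hNr]
  refine ⟨fun h => h.2.2, fun h => ?_⟩
  obtain ⟨s, t, rfl⟩ := hcoord z
  have ht := ENat.eq_of_min_two_mul_eq_two_mul_add_one (by rwa [addVal_add_mul_eq_min hϖE hf2] at h)
  obtain ⟨u, rfl⟩ := (exists_units_eq_pow_mul_iff hϖ).mpr ht
  rw [exists_mem_ordSet_eq_mul_iff hϖ hϖE hf2]
  exact ⟨⟨s, u, rfl⟩, fun ⟨_, hdvd⟩ => hϖ.not_isUnit (isUnit_of_dvd_unit hdvd u.isUnit), h⟩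

end Layers

theorem stmt_4_general {o O : Type*} [CommRing o] [IsDomain o] [IsDiscreteValuationRing o]
    [CommRing O] [IsDomain O] [IsDiscreteValuationRing O]
    (f : o →+* O)
    (ϖ : o) (hϖ : Irreducible ϖ)
    (β : O)
    (hgen : ∀ z : O, ∃ x y : o, z = f x + f y * β)
    (σ : O →+* O) (hσσ : ∀ z : O, σ (σ z) = z)
    (Nr : O →* o) (hNr : ∀ z : O, f (Nr z) = z * σ z)
    (ϖE : O) (hϖE : Irreducible ϖE)
    (hram : Associated (f ϖ) (ϖE ^ 2))
    (r n : ℕ) :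
    ((2 * r + 1 < n ∨ (n ≤ 2 * r ∧ Odd n)) → ordLayer f ϖ β Nr r n = ∅) ∧
    (ordLayer f ϖ β Nr r 0 = ordUnits f ϖ β r) ∧
    (Even n → 0 < n → n ≤ 2 * r →
      ordLayer f ϖ β Nr r n =
        (fun z => f (ϖ ^ (n / 2)) * z) ''
          (ordUnits f ϖ β (r - n / 2) \ ordUnits f ϖ β (r - n / 2 + 1))) ∧
    (ordLayer f ϖ β Nr r (2 * r + 1) =
      (fun z => ϖE ^ (2 * r + 1) * z) '' {z : O | IsUnit z}) := by
  have hf2 := addVal_map_eq_two_mul hϖ hϖE hram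
  have hcoord := exists_eq_add_mul_uniformizer hϖ hϖE hf2 hgen
  have hord : ordSet f ϖ β = ordSet f ϖ ϖE := ordSet_eq_of_generates hgen hcoord
  have hσ : Function.Involutive σ := hσσ
  rw [ordLayer_congr hord, ordUnits_congr hord]
  refine ⟨ordLayer_eq_empty_s4 hϖ hϖE hf2 hσ hNr, ordLayer_zero_s4 hϖ hϖE hf2 hcoord hσ hNr,
    fun ⟨l, hl⟩ hpos hle => ?_, ordLayer_two_mul_add_one hϖ hϖE hf2 hcoord hσ hNr⟩
  obtain rfl : n = 2 * l := by omega
  rw [Nat.mul_div_cancel_left l two_pos]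
  exact ordLayer_two_mul_s4 hϖ hϖE hf2 hcoord hσ hNr (by omega) (by omega)

/-- If `E/F` is a ramified quadratic field extension and `ϖ_E` a
uniformizer of `𝒪`, then for all `r, n ∈ ℕ`:
(i) `𝒪_r^{(n)} = ∅` if `n > 2r+1`, or if `0 ≤ n ≤ 2r` and `n` is odd;
(ii) `𝒪_r^{(0)} = 𝒪_r^×`;
(iii) `𝒪_r^{(n)} = ϖ^{n/2}·(𝒪_{r−n/2}^× ∖ 𝒪_{r−n/2+1}^×)` if `n` is even, `0 < n ≤ 2r`;
(iv) `𝒪_r^{(2r+1)} = ϖ_E^{2r+1}𝒪^×`. -/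
theorem stmt_4 {o O : Type*} [CommRing o] [IsDomain o] [IsDiscreteValuationRing o]
    [CommRing O] [IsDomain O] [IsDiscreteValuationRing O]
    (f : o →+* O) (hf : Function.Injective f)
    (ϖ : o) (hϖ : Irreducible ϖ)
    (β : O) (hβ : β ∉ Set.range f)
    (hgen : ∀ z : O, ∃ x y : o, z = f x + f y * β)
    (σ : O →+* O) (hσf : ∀ x : o, σ (f x) = f x) (hσσ : ∀ z : O, σ (σ z) = z)
    (Nr : O →* o) (hNr : ∀ z : O, f (Nr z) = z * σ z)
    (hβunit : IsUnit (Nr β))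
    (ϖE : O) (hϖE : Irreducible ϖE)
    (hram : Associated (f ϖ) (ϖE ^ 2))
    (r n : ℕ) :
    ((2 * r + 1 < n ∨ (n ≤ 2 * r ∧ Odd n)) → ordLayer f ϖ β Nr r n = ∅) ∧
    (ordLayer f ϖ β Nr r 0 = ordUnits f ϖ β r) ∧
    (Even n → 0 < n → n ≤ 2 * r →
      ordLayer f ϖ β Nr r n =
        (fun z => f (ϖ ^ (n / 2)) * z) ''
          (ordUnits f ϖ β (r - n / 2) \ ordUnits f ϖ β (r - n / 2 + 1))) ∧
    (ordLayer f ϖ β Nr r (2 * r + 1) =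
      (fun z => ϖE ^ (2 * r + 1) * z) '' {z : O | IsUnit z}) :=
  stmt_4_general f ϖ hϖ β hgen σ hσσ Nr hNr ϖE hϖE hram r n
end

section
/- Let E/F be a quadratic field extension. Then GL₂(F) is the disjoint union over r ∈ ℕ of the sets GL₂(𝔬)·a(ϖ^r)·ι₀(E^×), i.e. GL₂(F) = ⨆_{r=0}^{∞} GL₂(𝔬) a(ϖ^r) ι₀(E^×); equivalently (applying inversion) GL₂(F) = ⨆_{r=0}^{∞} ι₀(E^×) a(ϖ^r) GL₂(𝔬). -/
/-!
Identify `F²` with `E` through `w ↦ w₀β + w₁`. Then `ι₀ x` acts as multiplication by `x`, so the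
`𝔬`-lattice `L(g) ⊆ E` spanned by the columns of `g` satisfies `L(ι₀ t · g · k) = t · L(g)` for
`k ∈ GL₂(𝔬)`, and `L(a(ϖ^r)) = 𝔬 + ϖ^r 𝒪` is a ring.

Existence: after swapping the columns of `g`, the ratio of their images lies in `𝒪`, so it is
`s + uϖ^r β` with `s ∈ 𝔬` and `u ∈ 𝔬^×`, and this gives `g = ι₀(x) a(ϖ^r) [[0, u], [1, s]]`
explicitly. Uniqueness: if `t (𝔬 + ϖ^r 𝒪) = t' (𝔬 + ϖ^s 𝒪)`, one ring is a multiple of the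
other containing `1`, hence contains it; this forces `r = s`.

The decomposition `GL₂(𝔬) a(ϖ^r) ι₀(E^×)` follows from the other one through
`g ↦ a(-𝐚)⁻¹ gᵀ`, because transposition is conjugation by `a(-𝐚)` on `ι₀(E)`.
-/

def aM {F : Type*} [Field F] (y : F) : Matrix (Fin 2) (Fin 2) F := !![y, 0; 0, 1]

def GLo {F : Type*} [Field F] (o : ValuationSubring F) :
    Set (Matrix (Fin 2) (Fin 2) F) :=
  {g | (∀ i j, g i j ∈ o) ∧
    ∃ h : Matrix (Fin 2) (Fin 2) F, (∀ i j, h i j ∈ o) ∧ g * h = 1 ∧ h * g = 1}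

open Matrix Pointwise

theorem exists_eq_mul_pow_of_ne_zero {F : Type*} [Field F] {o : ValuationSubring F}
    [IsDiscreteValuationRing o] {ϖ : F} (hϖo : ϖ ∈ o)
    (hϖ : Irreducible (⟨ϖ, hϖo⟩ : o)) {t : F} (ht : t ∈ o) (ht0 : t ≠ 0) :
    ∃ (m : ℕ) (v : F), v ∈ o ∧ v⁻¹ ∈ o ∧ t = v * ϖ ^ m := by
  obtain ⟨m, u, hu⟩ := IsDiscreteValuationRing.eq_unit_mul_pow_irreducible
    (x := ⟨t, ht⟩) (by simpa [Subtype.ext_iff] using ht0) hϖ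
  have hinv : (((u⁻¹ : oˣ) : o) : F) = ((u : o) : F)⁻¹ :=
    eq_inv_of_mul_eq_one_right (congrArg Subtype.val u.mul_inv)
  exact ⟨m, u, (u : o).2, hinv ▸ ((u⁻¹ : oˣ) : o).2, by simpa using congrArg Subtype.val hu⟩

section GeneralLinear

variable {F : Type*} [Field F] {o : ValuationSubring F}

theorem aM_mul_aM (x y : F) : aM x * aM y = aM (x * y) := by
  ext i j; fin_cases i <;> fin_cases j <;> simp [aM]

theorem aM_mul_comm (x y : F) : aM x * aM y = aM y * aM x := by
  rw [aM_mul_aM, aM_mul_aM, mul_comm]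

theorem aM_one : aM (1 : F) = 1 := by
  ext i j; fin_cases i <;> fin_cases j <;> simp [aM]

theorem transpose_aM (y : F) : (aM y)ᵀ = aM y := by
  ext i j; fin_cases i <;> fin_cases j <;> simp [aM]

theorem mem_GLo_of_mul_eq_one {k h : Matrix (Fin 2) (Fin 2) F} (hk : ∀ i j, k i j ∈ o)
    (hh : ∀ i j, h i j ∈ o) (hkh : k * h = 1) : k ∈ GLo o :=
  ⟨hk, h, hh, hkh, mul_eq_one_comm.mp hkh⟩

theorem GLo_mul {k k' : Matrix (Fin 2) (Fin 2) F} (hk : k ∈ GLo o) (hk' : k' ∈ GLo o) :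
    k * k' ∈ GLo o := by
  obtain ⟨hkm, h, hhm, hkh, -⟩ := hk
  obtain ⟨hkm', h', hhm', hkh', -⟩ := hk'
  have entries {A B : Matrix (Fin 2) (Fin 2) F} (hA : ∀ i j, A i j ∈ o) (hB : ∀ i j, B i j ∈ o)
      (i j : Fin 2) : (A * B) i j ∈ o := by
    rw [mul_apply]; exact sum_mem fun l _ => mul_mem (hA i l) (hB l j)
  refine mem_GLo_of_mul_eq_one (entries hkm hkm') (entries hhm' hhm) ?_
  rw [Matrix.mul_assoc, ← Matrix.mul_assoc k', hkh', Matrix.one_mul, hkh]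

theorem GLo_transpose {k : Matrix (Fin 2) (Fin 2) F} (hk : k ∈ GLo o) : kᵀ ∈ GLo o := by
  obtain ⟨hkm, h, hhm, -, hhk⟩ := hk
  exact mem_GLo_of_mul_eq_one (h := hᵀ) (fun i j => hkm j i) (fun i j => hhm j i)
    (by rw [← transpose_mul, hhk, transpose_one])

theorem aM_mem_GLo {y : F} (hy : y ∈ o) (hy' : y⁻¹ ∈ o) (hy0 : y ≠ 0) : aM y ∈ GLo o := by
  refine mem_GLo_of_mul_eq_one (h := aM y⁻¹) ?_ ?_ (by rw [aM_mul_aM, mul_inv_cancel₀ hy0, aM_one])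
  all_goals simp [aM, Fin.forall_fin_two, hy, hy', zero_mem, one_mem]

theorem mulVec_image_pi_of_mem_GLo {k : Matrix (Fin 2) (Fin 2) F} (hk : k ∈ GLo o) :
    k.mulVec '' Set.univ.pi (fun _ => (o : Set F)) = Set.univ.pi fun _ => (o : Set F) := by
  obtain ⟨hkm, h, hhm, hkh, -⟩ := hk
  have maps {A : Matrix (Fin 2) (Fin 2) F} (hA : ∀ i j, A i j ∈ o) {w : Fin 2 → F}
      (hw : w ∈ Set.univ.pi fun _ => (o : Set F)) : A *ᵥ w ∈ Set.univ.pi fun _ => (o : Set F) :=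
    fun i _ => by rw [mulVec, dotProduct]; exact sum_mem fun j _ => mul_mem (hA i j) (hw j trivial)
  refine (Set.MapsTo.image_subset fun w hw => maps hkm hw).antisymm fun w hw => ?_
  exact ⟨h *ᵥ w, maps hhm hw, show k *ᵥ h *ᵥ w = w by rw [mulVec_mulVec, hkh, one_mulVec]⟩

end GeneralLinear

theorem subset_smul_of_one_mem {M : Type*} [CommMonoid M] {S : Set M}
    (hS : ∀ x ∈ S, ∀ y ∈ S, x * y ∈ S) {c : M} (h1 : 1 ∈ c • S) : S ⊆ c • S := by
  obtain ⟨z, hz, hcz : c * z = 1⟩ := h1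
  refine fun x hx => ⟨x * z, hS x hx z hz, ?_⟩
  show c * (x * z) = x
  rw [mul_left_comm, hcz, mul_one]

section Lattice

variable {F E : Type*} [Field F] [Field E] [Algebra F E]

variable (F) in
def toE (β : E) : (Fin 2 → F) →ₗ[F] E :=
  Fintype.linearCombination F ![β, 1]

theorem toE_apply (β : E) (w : Fin 2 → F) :
    toE F β w = algebraMap F E (w 0) * β + algebraMap F E (w 1) := by
  simp [toE, Fintype.linearCombination_apply, Fin.sum_univ_two, Algebra.smul_def]

theorem toE_single (β : E) (j : Fin 2) : toE F β (Pi.single j 1) = ![β, 1] j := by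
  simp [toE, Fintype.linearCombination_apply_single]

theorem linearIndependent_of_not_mem_range {β : E} (hβ : β ∉ Set.range (algebraMap F E)) :
    LinearIndependent F ![β, 1] := by
  rw [LinearIndependent.pair_symm_iff, LinearIndependent.pair_iff' one_ne_zero]
  exact fun s hs => hβ ⟨s, by rw [Algebra.algebraMap_eq_smul_one, hs]⟩

theorem toE_iota_mulVec {β : E} {ι : E → Matrix (Fin 2) (Fin 2) F}
    (hι : ∀ x : E, ∀ j : Fin 2,
      x * (![β, 1] j) = ∑ i : Fin 2, (![β, 1] i) * algebraMap F E (ι x i j))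
    (x : E) (w : Fin 2 → F) : toE F β (ι x *ᵥ w) = x * toE F β w := by
  have h0 := hι x 0
  have h1 := hι x 1
  simp only [cons_val_zero, cons_val_one, Fin.sum_univ_two, one_mul, mul_one] at h0 h1
  simp only [toE_apply, mulVec, dotProduct, Fin.sum_univ_two, map_add, map_mul]
  linear_combination (-algebraMap F E (w 0)) * h0 - algebraMap F E (w 1) * h1

theorem ext_of_toE_col {β : E} (hβ : LinearIndependent F ![β, 1])
    {A B : Matrix (Fin 2) (Fin 2) F} (h : ∀ j, toE F β (A.col j) = toE F β (B.col j)) : A = B :=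
  ext_of_mulVec_single fun j => by
    simpa only [mulVec_single_one] using hβ.fintypeLinearCombination_injective (h j)

theorem toE_mulVec_ne_zero {β : E} (hβ : LinearIndependent F ![β, 1])
    {g : Matrix (Fin 2) (Fin 2) F} (hg : IsUnit g) {w : Fin 2 → F} (hw : w ≠ 0) :
    toE F β (g *ᵥ w) ≠ 0 := by
  have hinj := hβ.fintypeLinearCombination_injective.comp (mulVec_injective_iff_isUnit.mpr hg)
  exact fun h => hw (hinj (a₂ := 0) (by simpa [toE] using h))

theorem iota_apply_one_zero {β : E} {a b : F} (hβ : LinearIndependent F ![β, 1])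
    (hmin : β ^ 2 - algebraMap F E b * β + algebraMap F E a = 0)
    {ι : E → Matrix (Fin 2) (Fin 2) F} (hι : ∀ x w, toE F β (ι x *ᵥ w) = x * toE F β w) (x : E) :
    ι x 1 0 = -(ι x 0 1 * a) := by
  have hcol (j : Fin 2) : toE F β ((ι x).col j) = x * ![β, 1] j := by
    rw [← mulVec_single_one, hι, toE_single]
  have hx : x = algebraMap F E (ι x 0 1) * β + algebraMap F E (ι x 1 1) := by
    simpa [toE_apply] using (hcol 1).symm
  have hcol0 : (ι x).col 0 = ![ι x 0 1 * b + ι x 1 1, -(ι x 0 1 * a)] := by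
    refine hβ.fintypeLinearCombination_injective (?_ : toE F β _ = toE F β _)
    rw [hcol 0, toE_apply]
    simp only [cons_val_zero, cons_val_one, map_add, map_mul, map_neg]
    linear_combination β * hx + algebraMap F E (ι x 0 1) * hmin
  simpa using congrFun hcol0 1

theorem toE_col_iota_mul {β : E} {ι : E → Matrix (Fin 2) (Fin 2) F}
    (hι : ∀ x w, toE F β (ι x *ᵥ w) = x * toE F β w) (x : E) (A : Matrix (Fin 2) (Fin 2) F)
    (j : Fin 2) : toE F β ((ι x * A).col j) = x * toE F β (A.col j) := by
  rw [← mulVec_single_one, ← mulVec_mulVec, hι, mulVec_single_one]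

theorem toE_aM_mulVec (β : E) (y : F) (w : Fin 2 → F) :
    toE F β (aM y *ᵥ w) = algebraMap F E (y * w 0) * β + algebraMap F E (w 1) := by
  simp [toE_apply, aM, dotProduct, Fin.sum_univ_two]

def lattice (o : ValuationSubring F) (β : E) (g : Matrix (Fin 2) (Fin 2) F) : Set E :=
  (toE F β ∘ g.mulVec) '' Set.univ.pi fun _ => (o : Set F)

variable {o : ValuationSubring F} {β : E}

theorem lattice_mul_of_mem_GLo (g : Matrix (Fin 2) (Fin 2) F) {k : Matrix (Fin 2) (Fin 2) F}
    (hk : k ∈ GLo o) : lattice o β (g * k) = lattice o β g := by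
  rw [lattice, lattice]
  conv_rhs => rw [← mulVec_image_pi_of_mem_GLo hk, Set.image_image]
  congr 1
  funext w
  simp only [Function.comp_apply, mulVec_mulVec]

theorem lattice_iota_mul {ι : E → Matrix (Fin 2) (Fin 2) F}
    (hι : ∀ x w, toE F β (ι x *ᵥ w) = x * toE F β w) (x : E) (g : Matrix (Fin 2) (Fin 2) F) :
    lattice o β (ι x * g) = x • lattice o β g := by
  rw [lattice, lattice, ← Set.image_smul, Set.image_image]
  congr 1
  funext w
  simp only [Function.comp_apply, ← mulVec_mulVec, hι, smul_eq_mul]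

theorem one_mem_lattice_aM (c : F) : (1 : E) ∈ lattice o β (aM c) :=
  ⟨![0, 1], by simp [Fin.forall_fin_two, zero_mem, one_mem],
    by simp only [Function.comp_apply, toE_aM_mulVec]; simp⟩

theorem mul_mem_lattice_aM {a b c : F} (ha : a ∈ o) (hb : b ∈ o) (hc : c ∈ o)
    (hmin : β ^ 2 - algebraMap F E b * β + algebraMap F E a = 0) {x y : E}
    (hx : x ∈ lattice o β (aM c)) (hy : y ∈ lattice o β (aM c)) :
    x * y ∈ lattice o β (aM c) := by
  obtain ⟨w, hw, rfl⟩ := hx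
  obtain ⟨w', hw', rfl⟩ := hy
  simp only [Set.mem_univ_pi, SetLike.mem_coe] at hw hw'
  -- expand `(c w₀ β + w₁) (c w₀' β + w₁')` using `β² = bβ - a`
  refine ⟨![b * c * w 0 * w' 0 + w 0 * w' 1 + w 1 * w' 0, w 1 * w' 1 - a * (c * w 0) * (c * w' 0)],
    ?_, ?_⟩
  · simp only [Set.mem_univ_pi, SetLike.mem_coe, Fin.forall_fin_two, cons_val_zero, cons_val_one]
    exact ⟨by aesop, by aesop⟩
  · simp only [Function.comp_apply, toE_aM_mulVec, cons_val_zero, cons_val_one, map_add, map_mul,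
      map_sub]
    linear_combination (-algebraMap F E c * algebraMap F E (w 0) * algebraMap F E c *
      algebraMap F E (w' 0)) * hmin

theorem le_of_lattice_aM_pow_subset (hβ : LinearIndependent F ![β, 1]) {ϖ : F} (hϖo : ϖ ∈ o)
    (hϖ : Irreducible (⟨ϖ, hϖo⟩ : o)) {r s : ℕ}
    (h : lattice o β (aM (ϖ ^ r)) ⊆ lattice o β (aM (ϖ ^ s))) : s ≤ r := by
  obtain ⟨w, hw, hws⟩ := h ⟨![1, 0], by simp [Fin.forall_fin_two, zero_mem, one_mem], rfl⟩
  have hϖr : ϖ ^ s * w 0 = ϖ ^ r := by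
    simpa [aM, mulVec, dotProduct, Fin.sum_univ_two] using
      congrFun (hβ.fintypeLinearCombination_injective hws) 0
  refine (pow_dvd_pow_iff hϖ.ne_zero hϖ.not_isUnit).mp ⟨⟨w 0, hw 0 trivial⟩, ?_⟩
  ext
  simpa using hϖr.symm

theorem le_of_smul_lattice_aM_pow_eq (hβ : LinearIndependent F ![β, 1]) {a b ϖ : F} (ha : a ∈ o)
    (hb : b ∈ o) (hmin : β ^ 2 - algebraMap F E b * β + algebraMap F E a = 0) (hϖo : ϖ ∈ o)
    (hϖ : Irreducible (⟨ϖ, hϖo⟩ : o)) {t t' : E} (ht : t ≠ 0) {r s : ℕ}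
    (h : t • lattice o β (aM (ϖ ^ r)) = t' • lattice o β (aM (ϖ ^ s))) : r ≤ s := by
  have hrs : lattice o β (aM (ϖ ^ r)) = (t⁻¹ * t') • lattice o β (aM (ϖ ^ s)) := by
    rw [mul_smul, ← h, inv_smul_smul₀ ht]
  refine le_of_lattice_aM_pow_subset hβ hϖo hϖ (hrs ▸ subset_smul_of_one_mem ?_ ?_)
  · exact fun x hx y hy => mul_mem_lattice_aM ha hb (pow_mem hϖo s) hmin hx hy
  · exact hrs ▸ one_mem_lattice_aM _

theorem eq_of_iota_mul_aM_pow_mul_eq (hβ : LinearIndependent F ![β, 1]) {a b ϖ : F}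
    (ha : a ∈ o) (hb : b ∈ o) (hmin : β ^ 2 - algebraMap F E b * β + algebraMap F E a = 0)
    (hϖo : ϖ ∈ o) (hϖ : Irreducible (⟨ϖ, hϖo⟩ : o)) {ι : E → Matrix (Fin 2) (Fin 2) F}
    (hι : ∀ x w, toE F β (ι x *ᵥ w) = x * toE F β w) {t t' : E} (ht : t ≠ 0) (ht' : t' ≠ 0)
    {k k' : Matrix (Fin 2) (Fin 2) F} (hk : k ∈ GLo o) (hk' : k' ∈ GLo o) {r s : ℕ}
    (h : ι t * aM (ϖ ^ r) * k = ι t' * aM (ϖ ^ s) * k') : r = s := by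
  have hL : t • lattice o β (aM (ϖ ^ r)) = t' • lattice o β (aM (ϖ ^ s)) := by
    rw [← lattice_iota_mul hι, ← lattice_iota_mul hι, ← lattice_mul_of_mem_GLo (ι t * _) hk,
      ← lattice_mul_of_mem_GLo (ι t' * _) hk', h]
  exact le_antisymm (le_of_smul_lattice_aM_pow_eq hβ ha hb hmin hϖo hϖ ht hL)
    (le_of_smul_lattice_aM_pow_eq hβ ha hb hmin hϖo hϖ ht' hL.symm)

theorem exists_eq_iota_mul_aM_pow_mul_of_div_mem [IsDiscreteValuationRing o]
    {O : ValuationSubring E} (hβ : LinearIndependent F ![β, 1])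
    (hO : ∀ z ∈ O, ∃ x y : F, x ∈ o ∧ y ∈ o ∧ z = algebraMap F E x + algebraMap F E y * β)
    {ϖ : F} (hϖo : ϖ ∈ o) (hϖ : Irreducible (⟨ϖ, hϖo⟩ : o)) {ι : E → Matrix (Fin 2) (Fin 2) F}
    (hι : ∀ x w, toE F β (ι x *ᵥ w) = x * toE F β w) {g : Matrix (Fin 2) (Fin 2) F}
    (hg : IsUnit g) (hdiv : toE F β (g.col 1) / toE F β (g.col 0) ∈ O) :
    ∃ r : ℕ, ∃ t : E, t ≠ 0 ∧ ∃ k ∈ GLo o, g = ι t * aM (ϖ ^ r) * k := by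
  have hx₀ : toE F β (g.col 0) ≠ 0 := by
    rw [← mulVec_single_one]
    exact toE_mulVec_ne_zero hβ hg (Pi.single_ne_zero_iff.mpr one_ne_zero)
  obtain ⟨s, t, hs, ht, hst⟩ := hO _ hdiv
  rw [div_eq_iff hx₀] at hst
  have ht0 : t ≠ 0 := by
    rintro rfl
    refine toE_mulVec_ne_zero hβ hg (w := ![-s, 1]) (by simp) ?_
    simp only [toE_apply, col_apply, map_zero, zero_mul, add_zero] at hst
    simp only [toE_apply, mulVec, dotProduct, Fin.sum_univ_two, cons_val_zero, cons_val_one,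
      map_add, map_mul, map_neg, mul_one]
    linear_combination hst
  obtain ⟨m, v, hv, hv', rfl⟩ := exists_eq_mul_pow_of_ne_zero hϖo hϖ ht ht0
  have hv0 : v ≠ 0 := left_ne_zero_of_mul ht0
  refine ⟨m, _, hx₀, !![0, v; 1, s], ?_, ?_⟩
  · refine mem_GLo_of_mul_eq_one (h := !![-(s * v⁻¹), 1; v⁻¹, 0]) ?_ ?_ ?_
    · simp [Fin.forall_fin_two, hv, hs, zero_mem, one_mem]
    · simp [Fin.forall_fin_two, hv', mul_mem hs hv', zero_mem, one_mem]
    · ext i j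
      fin_cases i <;> fin_cases j <;> simp [hv0]
  · refine ext_of_toE_col hβ fun j => ?_
    rw [Matrix.mul_assoc, toE_col_iota_mul hι]
    fin_cases j
    · simp [toE_apply, aM]
    · simp only [toE_apply, col_apply] at hst ⊢
      simp [aM, hst]
      ring

theorem exists_eq_iota_mul_aM_pow_mul [IsDiscreteValuationRing o] {O : ValuationSubring E}
    (hβ : LinearIndependent F ![β, 1])
    (hO : ∀ z ∈ O, ∃ x y : F, x ∈ o ∧ y ∈ o ∧ z = algebraMap F E x + algebraMap F E y * β)
    {ϖ : F} (hϖo : ϖ ∈ o) (hϖ : Irreducible (⟨ϖ, hϖo⟩ : o)) {ι : E → Matrix (Fin 2) (Fin 2) F}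
    (hι : ∀ x w, toE F β (ι x *ᵥ w) = x * toE F β w) {g : Matrix (Fin 2) (Fin 2) F}
    (hg : IsUnit g) : ∃ r : ℕ, ∃ t : E, t ≠ 0 ∧ ∃ k ∈ GLo o, g = ι t * aM (ϖ ^ r) * k := by
  rcases O.mem_or_inv_mem (toE F β (g.col 1) / toE F β (g.col 0)) with hdiv | hdiv
  · exact exists_eq_iota_mul_aM_pow_mul_of_div_mem hβ hO hϖo hϖ hι hg hdiv
  let P : Matrix (Fin 2) (Fin 2) F := !![0, 1; 1, 0]
  have hPP : P * P = 1 := by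
    ext i j
    fin_cases i <;> fin_cases j <;> simp [P]
  have hP : P ∈ GLo o := by
    refine mem_GLo_of_mul_eq_one ?_ ?_ hPP <;> simp [P, Fin.forall_fin_two, zero_mem, one_mem]
  have hgP0 : (g * P).col 0 = g.col 1 := by ext i; simp [P, mul_apply, Fin.sum_univ_two]
  have hgP1 : (g * P).col 1 = g.col 0 := by ext i; simp [P, mul_apply, Fin.sum_univ_two]
  obtain ⟨r, t, ht, k, hk, hgk⟩ := exists_eq_iota_mul_aM_pow_mul_of_div_mem hβ hO hϖo hϖ hι
    (hg.mul (IsUnit.of_mul_eq_one P hPP)) (by rwa [hgP0, hgP1, ← inv_div])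
  refine ⟨r, t, ht, k * P, GLo_mul hk hP, ?_⟩
  rw [← Matrix.mul_assoc, ← hgk, Matrix.mul_assoc, hPP, Matrix.mul_one]

theorem existsUnique_eq_iota_mul_aM_pow_mul [IsDiscreteValuationRing o] {O : ValuationSubring E}
    (hβ : LinearIndependent F ![β, 1]) {a b : F} (ha : a ∈ o) (hb : b ∈ o)
    (hmin : β ^ 2 - algebraMap F E b * β + algebraMap F E a = 0)
    (hO : ∀ z ∈ O, ∃ x y : F, x ∈ o ∧ y ∈ o ∧ z = algebraMap F E x + algebraMap F E y * β)
    {ϖ : F} (hϖo : ϖ ∈ o) (hϖ : Irreducible (⟨ϖ, hϖo⟩ : o)) {ι : E → Matrix (Fin 2) (Fin 2) F}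
    (hι : ∀ x w, toE F β (ι x *ᵥ w) = x * toE F β w) {g : Matrix (Fin 2) (Fin 2) F}
    (hg : IsUnit g) : ∃! r : ℕ, ∃ t : E, t ≠ 0 ∧ ∃ k ∈ GLo o, g = ι t * aM (ϖ ^ r) * k := by
  obtain ⟨r, hr⟩ := exists_eq_iota_mul_aM_pow_mul hβ hO hϖo hϖ hι hg
  refine ⟨r, hr, fun s ⟨t', ht', k', hk', hs⟩ => ?_⟩
  obtain ⟨t, ht, k, hk, hr⟩ := hr
  exact (eq_of_iota_mul_aM_pow_mul_eq hβ ha hb hmin hϖo hϖ hι ht ht' hk hk' (hr.symm.trans hs)).symm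

theorem transpose_iota_mul_aM_neg (hβ : LinearIndependent F ![β, 1]) {a b : F}
    (hmin : β ^ 2 - algebraMap F E b * β + algebraMap F E a = 0) {ι : E → Matrix (Fin 2) (Fin 2) F}
    (hι : ∀ x w, toE F β (ι x *ᵥ w) = x * toE F β w) (x : E) :
    (ι x)ᵀ * aM (-a) = aM (-a) * ι x := by
  have h := iota_apply_one_zero hβ hmin hι x
  ext i j
  fin_cases i <;> fin_cases j <;> simp [aM, mul_apply, Fin.sum_univ_two, h, mul_comm]

end Lattice

theorem exists_mul_aM_mul_iff {F E : Type*} [Field F] [Zero E] {o : ValuationSubring F}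
    {ι : E → Matrix (Fin 2) (Fin 2) F} {c : F} (hc : c ∈ o) (hc' : c⁻¹ ∈ o) (hc0 : c ≠ 0)
    (hconj : ∀ x, (ι x)ᵀ * aM c = aM c * ι x) (g : Matrix (Fin 2) (Fin 2) F) (y : F) :
    (∃ k ∈ GLo o, ∃ t : E, t ≠ 0 ∧ g = k * aM y * ι t) ↔
      ∃ t : E, t ≠ 0 ∧ ∃ k ∈ GLo o, aM c⁻¹ * gᵀ = ι t * aM y * k := by
  have hcc : aM c * aM c⁻¹ = 1 := by rw [aM_mul_aM, mul_inv_cancel₀ hc0, aM_one]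
  have hcc' : aM c⁻¹ * aM c = 1 := by rw [aM_mul_aM, inv_mul_cancel₀ hc0, aM_one]
  have hconj' (x : E) : aM c⁻¹ * (ι x)ᵀ = ι x * aM c⁻¹ := calc
    aM c⁻¹ * (ι x)ᵀ = aM c⁻¹ * ((ι x)ᵀ * aM c) * aM c⁻¹ := by
      rw [Matrix.mul_assoc (aM c⁻¹), Matrix.mul_assoc (ι x)ᵀ, hcc, Matrix.mul_one]
    _ = ι x * aM c⁻¹ := by rw [hconj, ← Matrix.mul_assoc, hcc', Matrix.one_mul]
  constructor
  · rintro ⟨k, hk, t, ht, rfl⟩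
    refine ⟨t, ht, aM c⁻¹ * kᵀ,
      GLo_mul (aM_mem_GLo hc' (by rwa [inv_inv]) (inv_ne_zero hc0)) (GLo_transpose hk), ?_⟩
    calc aM c⁻¹ * (k * aM y * ι t)ᵀ = aM c⁻¹ * (ι t)ᵀ * aM y * kᵀ := by
          simp only [transpose_mul, transpose_aM, Matrix.mul_assoc]
      _ = ι t * (aM c⁻¹ * aM y) * kᵀ := by rw [hconj', Matrix.mul_assoc (ι t)]
      _ = ι t * aM y * (aM c⁻¹ * kᵀ) := by rw [aM_mul_comm]; simp only [Matrix.mul_assoc]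
  · rintro ⟨t, ht, k, hk, h⟩
    refine ⟨kᵀ * aM c, GLo_mul (GLo_transpose hk) (aM_mem_GLo hc hc' hc0), t, ht, ?_⟩
    have hgt : gᵀ = aM c * (ι t * aM y * k) := by
      rw [← h, ← Matrix.mul_assoc, hcc, Matrix.one_mul]
    calc g = gᵀᵀ := (transpose_transpose g).symm
      _ = kᵀ * aM y * ((ι t)ᵀ * aM c) := by
          rw [hgt]; simp only [transpose_mul, transpose_aM, Matrix.mul_assoc]
      _ = kᵀ * aM c * aM y * ι t := by
          rw [hconj, ← Matrix.mul_assoc, Matrix.mul_assoc _ (aM y), aM_mul_comm y c]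
          simp only [Matrix.mul_assoc]

theorem stmt_8_general {F E : Type*} [Field F] [Field E] [Algebra F E]
    (o : ValuationSubring F) [IsDiscreteValuationRing o]
    (O : ValuationSubring E)
    (hcomp : ∀ x : F, x ∈ o ↔ algebraMap F E x ∈ O)
    (ϖ : F) (hϖo : ϖ ∈ o) (hϖ : Irreducible (⟨ϖ, hϖo⟩ : o))
    (β : E) (hβO : β ∈ O) (hβno : ¬ ∃ x ∈ o, β = algebraMap F E x)
    (hOgen : ∀ z ∈ O, ∃ x y : F, x ∈ o ∧ y ∈ o ∧
      z = algebraMap F E x + algebraMap F E y * β)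
    (a b : F) (hao : a ∈ o) (hbo : b ∈ o) (hau : a⁻¹ ∈ o) (hane : a ≠ 0)
    (hmin : β ^ 2 - algebraMap F E b * β + algebraMap F E a = 0)
    (ι₀ : E →+* Matrix (Fin 2) (Fin 2) F)
    (hι₀ : ∀ x : E, ∀ j : Fin 2,
      x * (![β, 1] j) = ∑ i : Fin 2, (![β, 1] i) * algebraMap F E (ι₀ x i j)) :
    (∀ g : Matrix (Fin 2) (Fin 2) F, IsUnit g →
      ∃! r : ℕ, ∃ k ∈ GLo o, ∃ t : E, t ≠ 0 ∧ g = k * aM (ϖ ^ r) * ι₀ t) ∧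
    (∀ g : Matrix (Fin 2) (Fin 2) F, IsUnit g →
      ∃! r : ℕ, ∃ t : E, t ≠ 0 ∧ ∃ k ∈ GLo o, g = ι₀ t * aM (ϖ ^ r) * k) := by
  have hβ : LinearIndependent F ![β, 1] := linearIndependent_of_not_mem_range
    fun ⟨x, hx⟩ => hβno ⟨x, (hcomp x).2 (hx ▸ hβO), hx.symm⟩
  have hι := toE_iota_mulVec hι₀
  have form₂ (g : Matrix (Fin 2) (Fin 2) F) (hg : IsUnit g) :
      ∃! r : ℕ, ∃ t : E, t ≠ 0 ∧ ∃ k ∈ GLo o, g = ι₀ t * aM (ϖ ^ r) * k :=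
    existsUnique_eq_iota_mul_aM_pow_mul hβ hao hbo hmin hOgen hϖo hϖ hι hg
  refine ⟨fun g hg => ?_, form₂⟩
  have ha0 : -a ≠ 0 := neg_ne_zero.2 hane
  have hunit : IsUnit (aM (-a)⁻¹ * gᵀ) :=
    (IsUnit.of_mul_eq_one (aM (-a)) (by rw [aM_mul_aM, inv_mul_cancel₀ ha0, aM_one])).mul
      ((isUnit_transpose g).2 hg)
  simpa only [exists_mul_aM_mul_iff (neg_mem hao) (by rwa [inv_neg, neg_mem_iff]) ha0
    (transpose_iota_mul_aM_neg hβ hmin hι)] using form₂ _ hunit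

/-- `GL₂(F)` is the disjoint union over `r ∈ ℕ` of the sets
`GL₂(𝔬)·a(ϖ^r)·ι₀(E^×)`, and equivalently (applying inversion) the disjoint union of
the sets `ι₀(E^×)·a(ϖ^r)·GL₂(𝔬)`: every invertible `2×2` matrix over `F` lies in
exactly one such double coset. -/
theorem stmt_8 {F E : Type*} [Field F] [Field E] [Algebra F E]
    (o : ValuationSubring F) [IsDiscreteValuationRing o]
    (O : ValuationSubring E) [IsDiscreteValuationRing O]
    (hcomp : ∀ x : F, x ∈ o ↔ algebraMap F E x ∈ O)
    (ϖ : F) (hϖo : ϖ ∈ o) (hϖ : Irreducible (⟨ϖ, hϖo⟩ : o))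
    (β : E) (hβO : β ∈ O) (hβno : ¬ ∃ x ∈ o, β = algebraMap F E x)
    (hOgen : ∀ z ∈ O, ∃ x y : F, x ∈ o ∧ y ∈ o ∧
      z = algebraMap F E x + algebraMap F E y * β)
    (hquad : ∀ z : E, ∃ s t : F, z = algebraMap F E s + algebraMap F E t * β)
    (a b : F) (hao : a ∈ o) (hbo : b ∈ o) (hau : a⁻¹ ∈ o) (hane : a ≠ 0)
    (hmin : β ^ 2 - algebraMap F E b * β + algebraMap F E a = 0)
    (ι₀ : E →+* Matrix (Fin 2) (Fin 2) F)
    (hι₀ : ∀ x : E, ∀ j : Fin 2,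
      x * (![β, 1] j) = ∑ i : Fin 2, (![β, 1] i) * algebraMap F E (ι₀ x i j)) :
    (∀ g : Matrix (Fin 2) (Fin 2) F, IsUnit g →
      ∃! r : ℕ, ∃ k ∈ GLo o, ∃ t : E, t ≠ 0 ∧ g = k * aM (ϖ ^ r) * ι₀ t) ∧
    (∀ g : Matrix (Fin 2) (Fin 2) F, IsUnit g →
      ∃! r : ℕ, ∃ t : E, t ≠ 0 ∧ ∃ k ∈ GLo o, g = ι₀ t * aM (ϖ ^ r) * k) :=
  stmt_8_general o O hcomp ϖ hϖo hϖ β hβO hβno hOgen a b hao hbo hau hane hmin ι₀ hι₀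
end
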